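/- arXiv:1307.3482 — 7 statements merged into one kernel-verified Lean document; each statement's English description precedes it below -/
import Mathlib

section
/- Let q be a prime power, and let a, b, x ∈ F_{q^2} with a ≠ 0 and b ≠ 0. Then there exists at most one y ∈ F_{q^2} with y ≠ x such that N(y) = N(x) and N(a + by) = N(a + bx). Moreover, if such y exists then y = (a b^q)/(a^q b) · x^q. -/
/-- Given `a, b ≠ 0` and `x` in the field with `q^2` elements, there is at most
one `y ≠ x` with `N y = N x` and `N (a + b y) = N (a + b x)`; moreover any such
`y` equals `(a * b^q) / (a^q * b) * x^q`, where `N t = t * t^q`. -/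
theorem norm_conditions_unique
    (q : ℕ) (hq : IsPrimePow q)
    (F : Type) [Field F] [Fintype F]
    (hF : Fintype.card F = q ^ 2)
    (a b x : F) (ha : a ≠ 0) (hb : b ≠ 0) :
    {y : F | y ≠ x ∧ y * y ^ q = x * x ^ q ∧
        (a + b * y) * (a + b * y) ^ q = (a + b * x) * (a + b * x) ^ q
      }.Subsingleton ∧
    (∀ y : F, y ≠ x → y * y ^ q = x * x ^ q →
        (a + b * y) * (a + b * y) ^ q = (a + b * x) * (a + b * x) ^ q →
        y = (a * b ^ q) / (a ^ q * b) * x ^ q) := by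
  obtain ⟨p, k, hpp, hk, rfl⟩ := hq
  have hp : p.Prime := hpp.nat_prime
  haveI : Fact p.Prime := ⟨hp⟩
  -- establish CharP F p
  haveI hring : CharP F (ringChar F) := ringChar.charP F
  obtain ⟨n, hr, hcard⟩ := FiniteField.card F (ringChar F)
  have hrp : ringChar F = p := by
    have h1 : (ringChar F) ∣ p ^ (k * 2) := by
      rw [← pow_mul] at hF
      rw [← hF, hcard]
      exact dvd_pow_self _ n.pos.ne'
    exact (Nat.prime_dvd_prime_iff_eq hr hp).mp (hr.dvd_of_dvd_pow h1)
  haveI : CharP F p := hrp ▸ hring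
  have hfrob : ∀ u v : F, (u + v) ^ p ^ k = u ^ p ^ k + v ^ p ^ k := fun u v =>
    add_pow_char_pow (R := F) (x := u) (y := v) (p := p) (n := k)
  have hA : a ^ p ^ k * b ≠ 0 := mul_ne_zero (pow_ne_zero _ ha) hb
  have main : ∀ y : F, y ≠ x → y * y ^ p ^ k = x * x ^ p ^ k →
      (a + b * y) * (a + b * y) ^ p ^ k = (a + b * x) * (a + b * x) ^ p ^ k →
      y = (a * b ^ p ^ k) / (a ^ p ^ k * b) * x ^ p ^ k := by
    intro y hy h1 h2
    rw [hfrob, hfrob, mul_pow, mul_pow] at h2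
    have e : a * b ^ p ^ k * y ^ p ^ k + a ^ p ^ k * b * y =
        a * b ^ p ^ k * x ^ p ^ k + a ^ p ^ k * b * x := by
      linear_combination h2 - b * b ^ p ^ k * h1
    have key : (a ^ p ^ k * b * y - a ^ p ^ k * b * x) *
        (a ^ p ^ k * b * y - a * b ^ p ^ k * x ^ p ^ k) = 0 := by
      linear_combination (a ^ p ^ k * b * y) * e - a * a ^ p ^ k * b * b ^ p ^ k * h1
    rcases mul_eq_zero.mp key with h | h
    · exact absurd (mul_left_cancel₀ hA (sub_eq_zero.mp h)) hy
    · have h' := sub_eq_zero.mp h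
      field_simp
      linear_combination h'
  refine ⟨?_, main⟩
  intro y1 hy1 y2 hy2
  rw [main y1 hy1.1 hy1.2.1 hy1.2.2, main y2 hy2.1 hy2.2.1 hy2.2.2]
end

section
/- Let q be a prime power, n ≥ 1, and 1 ≤ j < n. If x_1, …, x_j ∈ F_{q^2}^n are orthonormal (x_i* x_i = 1 for all i and x_i* x_k = 0 for i ≠ k), then there exist x_{j+1}, …, x_n ∈ F_{q^2}^n such that x_1, …, x_n form an orthonormal basis of F_{q^2}^n. -/
lemma exists_frob (q : ℕ) (hq : IsPrimePow q) (F : Type) [Field F] [Fintype F]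
    (hF : Fintype.card F = q ^ 2) : ∃ φ : F →+* F, ∀ a, φ a = a ^ q := by
  obtain ⟨p, k, pp, hk, rfl⟩ := hq
  have pnp : p.Prime := Nat.prime_iff.mpr pp
  have hcast : ((p : F)) = 0 := by
    have h := FiniteField.cast_card_eq_zero F
    rw [hF] at h
    push_cast at h
    rw [← pow_mul] at h
    exact pow_eq_zero_iff (by positivity) |>.mp h
  have hchar : ringChar F = p := CharP.ringChar_of_prime_eq_zero pnp hcast
  haveI : CharP F p := hchar ▸ ringChar.charP F
  haveI : ExpChar F p := .prime pnp
  exact ⟨iterateFrobenius F p k, fun a => iterateFrobenius_def p k a⟩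

def hermL (q : ℕ) {F : Type} [Field F] {n : ℕ} (v : Fin n → F) : (Fin n → F) →ₗ[F] F where
  toFun w := ∑ t, v t ^ q * w t
  map_add' w w' := by simp [mul_add, Finset.sum_add_distrib]
  map_smul' c w := by simp [Finset.mul_sum, Pi.smul_apply, smul_eq_mul]; ring_nf; simp [mul_comm, mul_left_comm]

lemma hermL_conj (q : ℕ) {F : Type} [Field F] [Fintype F]
    (hF : Fintype.card F = q ^ 2) (φ : F →+* F) (hφ : ∀ a, φ a = a ^ q)
    {n : ℕ} (v w : Fin n → F) : (hermL q v w) ^ q = hermL q w v := by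
  have h2 : ∀ a : F, (a ^ q) ^ q = a := by
    intro a; rw [← pow_mul, ← sq, ← hF, FiniteField.pow_card]
  calc (hermL q v w) ^ q = φ (∑ t, v t ^ q * w t) := by rw [hφ]; rfl
    _ = ∑ t, (v t ^ q) ^ q * (w t) ^ q := by rw [map_sum]; simp [hφ, mul_pow]
    _ = ∑ t, w t ^ q * v t := by
        refine Finset.sum_congr rfl fun t _ => ?_; rw [h2, mul_comm]
open Polynomial Finset
open scoped Classical

lemma root_count {F : Type} [Field F] [Fintype F] (P : Polynomial F) (hP : P ≠ 0) :
    (Finset.univ.filter fun a : F => P.eval a = 0).card ≤ P.natDegree := by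
  have h1 : (Finset.univ.filter fun a : F => P.eval a = 0) ⊆ P.roots.toFinset := by
    intro a ha
    simp only [Finset.mem_filter] at ha
    simp [Polynomial.mem_roots, hP, ha.2]
  calc (Finset.univ.filter fun a : F => P.eval a = 0).card
      ≤ P.roots.toFinset.card := Finset.card_le_card h1
    _ ≤ Multiset.card P.roots := P.roots.toFinset_card_le
    _ ≤ P.natDegree := P.card_roots'

lemma trace_ne (q : ℕ) {F : Type} [Field F] [Fintype F] (hq2 : 2 ≤ q)
    (hF : Fintype.card F = q ^ 2) : ∃ μ : F, μ ^ q + μ ≠ 0 := by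
  by_contra h
  push_neg at h
  have hPne : (X ^ q + X : Polynomial F) ≠ 0 := by
    intro hc
    have := congrArg (fun P => Polynomial.coeff P q) hc
    simp only [Polynomial.coeff_add, Polynomial.coeff_X_pow, Polynomial.coeff_X, Polynomial.coeff_zero, if_pos rfl, if_neg (by omega : ¬(1 = q))] at this
    simp at this
  have hcard := root_count (X ^ q + X : Polynomial F) hPne
  have hsub : (Finset.univ : Finset F) ⊆ (Finset.univ.filter fun a : F => (X ^ q + X : Polynomial F).eval a = 0) := by
    intro a _
    simp [h a]
  have hdeg : (X ^ q + X : Polynomial F).natDegree ≤ q := by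
    apply le_trans (Polynomial.natDegree_add_le _ _)
    simp [Polynomial.natDegree_X_pow]
    omega
  have := Finset.card_le_card hsub
  rw [Finset.card_univ, hF] at this
  have : q ^ 2 ≤ q := le_trans this (le_trans hcard hdeg)
  nlinarith

lemma norm_surj (q : ℕ) {F : Type} [Field F] [Fintype F] (hq2 : 2 ≤ q)
    (hF : Fintype.card F = q ^ 2) (d : F) (hd : d ≠ 0) (hdq : d ^ q = d) :
    ∃ c : F, c ^ (q + 1) = d := by
  have h2 : ∀ a : F, a ^ (q * q) = a := by
    intro a
    rw [show q * q = Fintype.card F by rw [hF]; ring]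
    exact FiniteField.pow_card a
  set S : Finset F := Finset.univ.image (fun l : F => l ^ (q + 1)) with hS
  have hSfix : S ⊆ Finset.univ.filter fun y : F => y ^ q = y := by
    intro y hy
    simp only [hS, Finset.mem_image] at hy
    obtain ⟨l, _, rfl⟩ := hy
    simp only [Finset.mem_filter, Finset.mem_univ, true_and]
    rw [← pow_mul]
    have : (q + 1) * q = q * q + q := by ring
    rw [this, pow_add, h2, ← pow_succ']
  have hfixcard : (Finset.univ.filter fun y : F => y ^ q = y).card ≤ q := by
    have hPne : (X ^ q - X : Polynomial F) ≠ 0 := by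
      intro hc
      have := congrArg (fun P => Polynomial.coeff P q) hc
      simp only [Polynomial.coeff_sub, Polynomial.coeff_X_pow, Polynomial.coeff_X, Polynomial.coeff_zero, if_pos rfl, if_neg (by omega : ¬(1 = q))] at this
      simp at this
    have hdeg : (X ^ q - X : Polynomial F).natDegree ≤ q := by
      apply le_trans (Polynomial.natDegree_sub_le _ _)
      simp [Polynomial.natDegree_X_pow]; omega
    refine le_trans (le_trans (Finset.card_le_card ?_) (root_count _ hPne)) hdeg
    intro a ha
    simp only [Finset.mem_filter, Finset.mem_univ, true_and] at ha ⊢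
    simp [sub_eq_zero, ha]
  have hScard : q ≤ S.card := by
    have hfib : (Finset.univ : Finset F).card ≤ (q + 1) * S.card := by
      rw [hS]
      refine Finset.card_le_mul_card_image (f := fun l : F => l ^ (q + 1)) Finset.univ (q + 1) ?_
      intro y _
      have hPne : (X ^ (q + 1) - C y : Polynomial F) ≠ 0 :=
        (Polynomial.monic_X_pow_sub_C y (by omega : q + 1 ≠ 0)).ne_zero
      have hdeg : (X ^ (q + 1) - C y : Polynomial F).natDegree = q + 1 :=
        Polynomial.natDegree_X_pow_sub_C
      calc (Finset.univ.filter fun l : F => l ^ (q + 1) = y).card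
          ≤ (X ^ (q + 1) - C y : Polynomial F).natDegree := by
            refine le_trans (Finset.card_le_card ?_) (root_count _ hPne)
            intro a ha
            simp only [Finset.mem_filter, Finset.mem_univ, true_and] at ha ⊢
            simp [sub_eq_zero, ha]
        _ = q + 1 := hdeg
    rw [Finset.card_univ, hF] at hfib
    nlinarith [S.card]
  have hSeq : S = Finset.univ.filter fun y : F => y ^ q = y :=
    Finset.eq_of_subset_of_card_le hSfix (le_trans hfixcard hScard)
  have hdS : d ∈ S := by
    rw [hSeq]; simp [hdq]
  rw [hS] at hdS
  simp only [Finset.mem_image, Finset.mem_univ, true_and] at hdS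
  obtain ⟨c, hc⟩ := hdS
  exact ⟨c, hc⟩


lemma hermL_apply (q : ℕ) {F : Type} [Field F] {n : ℕ} (v w : Fin n → F) :
    hermL q v w = ∑ t, v t ^ q * w t := rfl

lemma hermL_add_left (q : ℕ) {F : Type} [Field F] (hq : q ≠ 0) (φ : F →+* F)
    (hφ : ∀ a, φ a = a ^ q) {n : ℕ} (v v' w : Fin n → F) :
    hermL q (v + v') w = hermL q v w + hermL q v' w := by
  simp only [hermL_apply, ← Finset.sum_add_distrib]
  refine Finset.sum_congr rfl fun t _ => ?_
  have : (v t + v' t) ^ q = v t ^ q + v' t ^ q := by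
    rw [← hφ, ← hφ, ← hφ, map_add]
  simp [Pi.add_apply, this, add_mul]

lemma hermL_smul_left (q : ℕ) {F : Type} [Field F] {n : ℕ} (c : F) (v w : Fin n → F) :
    hermL q (c • v) w = c ^ q * hermL q v w := by
  simp [hermL_apply, Finset.mul_sum, mul_pow, mul_assoc]

lemma key_exists (q : ℕ) (hq : IsPrimePow q) {F : Type} [Field F] [Fintype F]
    (hF : Fintype.card F = q ^ 2) {n j : ℕ} (hjn : j < n)
    (x : Fin j → (Fin n → F))
    (hx : ∀ i k : Fin j, hermL q (x i) (x k) = if i = k then 1 else 0) :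
    ∃ w : Fin n → F, (∀ i, hermL q (x i) w = 0) ∧ hermL q w w = 1 := by
  obtain ⟨φ, hφ⟩ := exists_frob q hq F hF
  have hq2 : 2 ≤ q := hq.two_le
  have hqne : q ≠ 0 := by omega
  have hpc : ∀ a : F, (a ^ q) ^ q = a := by
    intro a; rw [← pow_mul, show q * q = Fintype.card F by rw [hF]; ring, FiniteField.pow_card]
  have conj : ∀ v w : Fin n → F, (hermL q v w) ^ q = hermL q w v :=
    fun v w => hermL_conj q hF φ hφ v w
  -- the orthogonal complement
  set ψ : (Fin n → F) →ₗ[F] (Fin j → F) := LinearMap.pi (fun i => hermL q (x i)) with hψ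
  set W := LinearMap.ker ψ with hW
  have memW : ∀ v, v ∈ W ↔ ∀ i, hermL q (x i) v = 0 := by
    intro v
    rw [hW, LinearMap.mem_ker, hψ]
    constructor
    · intro h i; exact congrFun h i
    · intro h; funext i; exact h i
  -- W is nontrivial
  have hWne : W ≠ ⊥ := by
    intro hbot
    have h1 := LinearMap.finrank_range_add_finrank_ker ψ
    rw [← hW, hbot, finrank_bot, add_zero, Module.finrank_fin_fun] at h1
    have h2 : Module.finrank F (LinearMap.range ψ) ≤ j := by
      have := Submodule.finrank_le (LinearMap.range ψ)
      rwa [Module.finrank_fin_fun] at this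
    omega
  -- decomposition: every vector is span + W
  have decomp : ∀ v : Fin n → F, v - ∑ i, (hermL q (x i) v) • x i ∈ W := by
    intro v
    rw [memW]
    intro k
    rw [map_sub, map_sum]
    have : ∀ i, hermL q (x k) ((hermL q (x i) v) • x i) = if k = i then hermL q (x i) v else 0 := by
      intro i
      rw [map_smul, smul_eq_mul, hx k i]
      by_cases h : k = i <;> simp [h]
    rw [Finset.sum_congr rfl (fun i _ => this i), Finset.sum_ite_eq, if_pos (Finset.mem_univ k)]
    ring
  -- overall nondegeneracy
  have nondeg : ∀ w : Fin n → F, (∀ v, hermL q w v = 0) → w = 0 := by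
    intro w h
    funext t
    have := h (Pi.single t 1)
    rw [hermL_apply] at this
    simp only [Pi.single_apply, mul_ite, mul_one, mul_zero, Finset.sum_ite_eq',
      Finset.mem_univ, if_true] at this
    exact pow_eq_zero_iff hqne |>.mp this
  -- find an anisotropic vector in W
  have aniso : ∃ w ∈ W, hermL q w w ≠ 0 := by
    by_contra hneg
    push_neg at hneg
    obtain ⟨w₀, hw₀W, hw₀ne⟩ := Submodule.exists_mem_ne_zero_of_ne_bot hWne
    -- find u ∈ W with hermL w₀ u ≠ 0
    have : ∃ u ∈ W, hermL q w₀ u ≠ 0 := by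
      by_contra hu
      push_neg at hu
      apply hw₀ne
      apply nondeg
      intro v
      have hxw : ∀ i, hermL q w₀ (x i) = 0 := by
        intro i
        have := (memW w₀).mp hw₀W i
        rw [← conj, this, zero_pow hqne]
      have hv' := hu _ (decomp v)
      rw [map_sub, map_sum, sub_eq_zero] at hv'
      rw [hv']
      rw [Finset.sum_congr rfl (fun i _ => by rw [map_smul, smul_eq_mul, hxw i, mul_zero])]
      simp
    obtain ⟨u, huW, hune⟩ := this
    set a := hermL q w₀ u with ha
    obtain ⟨μ, hμ⟩ := trace_ne q hq2 hF
    set l : F := μ * (a ^ q)⁻¹ with hl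
    have haq : a ^ q ≠ 0 := pow_ne_zero _ hune
    have hla : l * a ^ q = μ := by
      rw [hl]; field_simp
    have hlqa : l ^ q * a = μ ^ q := by
      have : (l * a ^ q) ^ q = l ^ q * a := by
        rw [mul_pow, hpc]
      rw [← this, hla]
    have hwW : u + l • w₀ ∈ W := W.add_mem huW (W.smul_mem l hw₀W)
    have h1 : hermL q u w₀ = a ^ q := by rw [ha, conj w₀ u]
    have expand : hermL q (u + l • w₀) (u + l • w₀)
        = hermL q u u + l * hermL q u w₀ + (l ^ q * hermL q w₀ u + l ^ q * (l * hermL q w₀ w₀)) := by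
      rw [hermL_add_left q hqne φ hφ, hermL_smul_left, map_add, map_add, map_smul, map_smul,
        smul_eq_mul, smul_eq_mul, mul_add]
    have hcontr := hneg _ hwW
    rw [expand, hneg u huW, hneg w₀ hw₀W, h1, ← ha, hla, hlqa] at hcontr
    rw [mul_zero, mul_zero, add_zero, zero_add] at hcontr
    exact hμ (by rw [add_comm] at hcontr; exact hcontr)
  -- normalize
  obtain ⟨w, hwW, hwne⟩ := aniso
  set c := hermL q w w with hc
  have hcq : c ^ q = c := by rw [hc, conj]
  have hcinv : (c⁻¹ : F) ^ q = c⁻¹ := by rw [inv_pow, hcq]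
  obtain ⟨l, hlp⟩ := norm_surj q hq2 hF c⁻¹ (inv_ne_zero hwne) hcinv
  refine ⟨l • w, ?_, ?_⟩
  · intro i
    rw [map_smul, (memW w).mp hwW i, smul_zero]
  · rw [map_smul, hermL_smul_left, smul_eq_mul, ← hc]
    rw [← mul_assoc, ← pow_succ' l q, hlp, inv_mul_cancel₀ hwne]

lemma extend_aux (q : ℕ) (hq : IsPrimePow q) {F : Type} [Field F] [Fintype F]
    (hF : Fintype.card F = q ^ 2) (n : ℕ) :
    ∀ (d j : ℕ) (hd : j + d = n) (x : Fin j → (Fin n → F))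
      (hx : ∀ i k : Fin j, hermL q (x i) (x k) = if i = k then 1 else 0),
    ∃ y : Fin n → (Fin n → F),
      (∀ i : Fin j, y (Fin.castLE (by omega) i) = x i) ∧
      (∀ i k : Fin n, hermL q (y i) (y k) = if i = k then 1 else 0) := by
  obtain ⟨φ, hφ⟩ := exists_frob q hq F hF
  have hqne : q ≠ 0 := by have := hq.two_le; omega
  have conj : ∀ {m : ℕ} (v w : Fin m → F), (hermL q v w) ^ q = hermL q w v :=
    fun v w => hermL_conj q hF φ hφ v w
  intro d
  induction d with
  | zero =>
    intro j hd x hx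
    have hj : j = n := by omega
    subst hj
    exact ⟨x, fun i => rfl, hx⟩
  | succ d ih =>
    intro j hd x hx
    have hjn : j < n := by omega
    obtain ⟨w, hw1, hw2⟩ := key_exists q hq hF hjn x hx
    set x' : Fin (j + 1) → Fin n → F := Fin.snoc x w with hx'def
    have hx' : ∀ i k : Fin (j + 1), hermL q (x' i) (x' k) = if i = k then 1 else 0 := by
      intro i k
      induction i using Fin.lastCases with
      | last =>
        induction k using Fin.lastCases with
        | last => simp [hx'def, Fin.snoc_last, hw2]
        | cast k' =>
          rw [hx'def]
          simp only [Fin.snoc_last, Fin.snoc_castSucc]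
          rw [if_neg (Fin.castSucc_lt_last k').ne']
          rw [← conj (x k') w, hw1 k', zero_pow hqne]
      | cast i' =>
        induction k using Fin.lastCases with
        | last =>
          rw [hx'def]
          simp only [Fin.snoc_last, Fin.snoc_castSucc]
          rw [if_neg (Fin.castSucc_lt_last i').ne, hw1 i']
        | cast k' =>
          rw [hx'def]
          simp only [Fin.snoc_castSucc]
          rw [hx i' k']
          by_cases h : i' = k'
          · simp [h]
          · rw [if_neg h, if_neg (by simpa [Fin.castSucc_inj] using h)]
    obtain ⟨y, hy1, hy2⟩ := ih (j + 1) (by omega) x' hx'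
    refine ⟨y, ?_, hy2⟩
    intro i
    calc y (Fin.castLE (by omega) i) = y (Fin.castLE (by omega) i.castSucc) := rfl
      _ = x' i.castSucc := hy1 i.castSucc
      _ = x i := by rw [hx'def, Fin.snoc_castSucc]

/-- Orthonormal vectors with respect to the hermitian inner product over the
field with `q^2` elements extend to an orthonormal basis. -/
theorem orthonormal_extension
    (q : ℕ) (hq : IsPrimePow q)
    (F : Type) [Field F] [Fintype F]
    (hF : Fintype.card F = q ^ 2) (n j : ℕ)
    (hj : 1 ≤ j) (hjn : j < n)
    (x : Fin j → (Fin n → F))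
    (hx : ∀ i k : Fin j,
      (∑ t, (x i t) ^ q * x k t) = if i = k then 1 else 0) :
    ∃ y : Fin n → (Fin n → F),
      (∀ i : Fin j, y (Fin.castLE hjn.le i) = x i) ∧
      (∀ i k : Fin n,
        (∑ t, (y i t) ^ q * y k t) = if i = k then 1 else 0) ∧
      LinearIndependent F y := by
  obtain ⟨y, hy1, hy2⟩ := extend_aux q hq hF n (n - j) j (by omega) x hx
  refine ⟨y, hy1, hy2, ?_⟩
  rw [Fintype.linearIndependent_iff]
  intro g hg k
  have h := congrArg (fun v => hermL q (y k) v) hg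
  simp only [map_sum, map_zero, map_smul, smul_eq_mul] at h
  rw [Finset.sum_congr rfl (fun i _ => by rw [hy2 k i])] at h
  simpa [mul_ite, Finset.sum_ite_eq] using h
end

section
/- Let q be a prime power and A an n×n hermitian matrix over F_{q^2} of rank r. Then the number of points ⟨x⟩ of the projective space PG(n−1, q^2) (one-dimensional subspaces of F_{q^2}^n) with x* A x = 0 equals (q^{2n−1} + (−1)^r (q−1) q^{2n−r−1} − 1)/(q^2 − 1). -/
/-!
The Frobenius `σ x = x ^ q` is an involutive automorphism of `F = 𝔽_{q²}` and `A` defines a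
`σ`-hermitian form. Since `σ ≠ id`, a nonzero hermitian form has a non-isotropic vector, so it
has an orthogonal basis; its Gram matrix there is diagonal, congruent to `A` (hence with `r` nonzero
entries) and has entries in the fixed field `𝔽_q`. In these coordinates the form reads
`∑ dᵢ N(yᵢ)` with `N(y) = y ^ (q + 1)` the norm to `𝔽_q`, whose fibres over `𝔽_q^×` have `q + 1`
elements. Adding one coordinate at a time gives the number of isotropic vectors,
`#{x | x* A x = 0} · q = q^(2n) + (-1)^r (q - 1) q^(2n - r)`, and every projective point
accounts for `q² - 1` of the nonzero ones.
-/

open Matrix Finset Module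

theorem pow_pred_eq_one_of_pow_eq_self {M : Type*} [MonoidWithZero M] [IsCancelMulZero M]
    {a : M} {q : ℕ} (ha₀ : a ≠ 0) (ha : a ^ q = a) (hq : 1 ≤ q) : a ^ (q - 1) = 1 := by
  apply mul_left_cancel₀ ha₀
  rw [← pow_succ', Nat.sub_add_cancel hq, ha, mul_one]

section FiniteField

variable {F : Type*} [Field F] [Fintype F] {q : ℕ}

theorem exists_ringHom_apply_eq_pow (hq : IsPrimePow q) (hF : Fintype.card F = q ^ 2) :
    ∃ σ : F →+* F, ∀ x, σ x = x ^ q := by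
  obtain ⟨p, k, hp, -, rfl⟩ := hq
  have : Fact p.Prime := ⟨hp.nat_prime⟩
  have : CharP F p := charP_of_card_eq_prime_pow (f := k * 2) (by rw [hF, pow_mul])
  exact ⟨iterateFrobenius F p k, iterateFrobenius_def p k⟩

theorem two_le_of_card_eq_sq (hF : Fintype.card F = q ^ 2) : 2 ≤ q := by
  have := hF ▸ Fintype.one_lt_card (α := F)
  by_contra! h
  interval_cases q <;> simp at this

theorem pow_pow_eq_self_of_card_eq_sq (hF : Fintype.card F = q ^ 2) (x : F) :
    (x ^ q) ^ q = x := by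
  rw [← pow_mul, ← sq, ← hF, FiniteField.pow_card]

theorem map_pow_succ_eq_self {σ : F →+* F} (hσ : ∀ x, σ x = x ^ q)
    (hF : Fintype.card F = q ^ 2) (x : F) : σ (x ^ (q + 1)) = x ^ (q + 1) := by
  rw [pow_succ, map_mul, hσ, hσ, pow_pow_eq_self_of_card_eq_sq hF, mul_comm]

variable [DecidableEq F]

theorem exists_isPrimitiveRoot_card_sub_one :
    ∃ g : F, IsPrimitiveRoot g (Fintype.card F - 1) := by
  obtain ⟨g, hg⟩ := IsCyclic.exists_ofOrder_eq_natCard (α := Fˣ)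
  refine ⟨g, IsPrimitiveRoot.coe_units_iff.mpr ?_⟩
  rw [← Fintype.card_units, ← Nat.card_eq_fintype_card, ← hg]
  exact IsPrimitiveRoot.orderOf g

theorem exists_pow_ne_self (hF : Fintype.card F = q ^ 2) : ∃ c : F, c ^ q ≠ c := by
  have hq := two_le_of_card_eq_sq hF
  obtain ⟨g, hg⟩ := exists_isPrimitiveRoot_card_sub_one (F := F)
  have hq₂ : q + 1 < q ^ 2 := by nlinarith
  rw [hF] at hg
  refine ⟨g, fun hfix => ?_⟩
  have hdvd := hg.dvd_of_pow_eq_one _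
    (pow_pred_eq_one_of_pow_eq_self (hg.ne_zero (by omega)) hfix (by omega))
  have := Nat.le_of_dvd (by omega) hdvd
  omega

/-- Here `c ↦ c ^ (q + 1)` is the norm `𝔽_{q²} → 𝔽_q`, and `a ^ q = a` says that `a ∈ 𝔽_q`. -/
theorem card_filter_pow_succ_eq (hF : Fintype.card F = q ^ 2) {a : F} (ha : a ^ q = a) :
    #{c : F | c ^ (q + 1) = a} = if a = 0 then 1 else q + 1 := by
  have hq := two_le_of_card_eq_sq hF
  split_ifs with ha₀
  · subst ha₀
    simp [card_eq_one, eq_singleton_iff_unique_mem]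
  obtain ⟨g, hg⟩ := exists_isPrimitiveRoot_card_sub_one (F := F)
  rw [hF, ← one_pow 2, Nat.sq_sub_sq] at hg
  have : NeZero (q - 1) := ⟨by omega⟩
  have hζ : IsPrimitiveRoot (g ^ (q - 1)) (q + 1) := by
    simpa [Nat.mul_div_cancel _ (show 0 < q - 1 by omega)] using
      hg.pow_of_dvd (by omega) (dvd_mul_left (q - 1) (q + 1))
  have hη : IsPrimitiveRoot (g ^ (q + 1)) (q - 1) := by
    simpa using hg.pow_of_dvd (by omega) (dvd_mul_right (q + 1) (q - 1))
  obtain ⟨i, -, hi⟩ :=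
    hη.eq_pow_of_pow_eq_one (pow_pred_eq_one_of_pow_eq_self ha₀ ha (by omega))
  have hroots : ∃ c, c ^ (q + 1) = a := ⟨g ^ i, by rw [← hi, ← pow_mul, ← pow_mul, mul_comm]⟩
  have hcard := hζ.card_nthRoots a
  rw [if_pos hroots, ← Multiset.toFinset_card_of_nodup (hζ.nthRoots_nodup ha₀)] at hcard
  refine (congrArg card ?_).trans hcard
  ext c
  simp [Polynomial.mem_nthRoots]

theorem card_filter_mul_pow_succ_add_eq_zero {σ : F →+* F} (hσ : ∀ x, σ x = x ^ q)
    (hF : Fintype.card F = q ^ 2) {d s : F} (hd : σ d = d) (hs : σ s = s) :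
    #{c : F | d * c ^ (q + 1) + s = 0} =
      if d = 0 then (if s = 0 then q ^ 2 else 0) else (if s = 0 then 1 else q + 1) := by
  by_cases hd₀ : d = 0
  · by_cases hs₀ : s = 0 <;> simp [hd₀, hs₀, hF]
  have hfix : (-s / d) ^ q = -s / d := by rw [← hσ, map_div₀, map_neg, hs, hd]
  have hcard := card_filter_pow_succ_eq hF hfix
  simp only [div_eq_zero_iff, neg_eq_zero, hd₀, or_false] at hcard
  rw [if_neg hd₀, ← hcard]
  congr 1
  ext c
  rw [mem_filter, mem_filter, eq_div_iff hd₀, eq_neg_iff_add_eq_zero, mul_comm]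

end FiniteField

theorem Finset.card_filter_fin_succ {α : Type*} [Fintype α] {n : ℕ}
    (P : α → (Fin n → α) → Prop) [∀ c y, Decidable (P c y)] :
    #{x : Fin (n + 1) → α | P (x 0) (Fin.tail x)} = ∑ y : Fin n → α, #{c : α | P c y} := by
  simp only [card_filter]
  rw [← (Fin.consEquiv fun _ => α).sum_comp, Fintype.sum_prod_type, sum_comm]
  simp [Fin.consEquiv]

theorem Finset.sum_ite_eq_card_filter_mul_add {α : Type*} [Fintype α] (p : α → Prop)
    [DecidablePred p] (a b : ℤ) :
    ∑ x, (if p x then a else b) = #{x | p x} * a + (Fintype.card α - #{x | p x}) * b := by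
  rw [sum_ite, sum_const, sum_const, ← card_univ,
    ← card_filter_add_card_filter_not (s := univ) p]
  simp

section DiagonalForm

variable {F : Type*} [Field F] [Fintype F] [DecidableEq F] {q : ℕ}

theorem card_filter_sum_mul_pow_succ_eq_zero {σ : F →+* F} (hσ : ∀ x, σ x = x ^ q)
    (hF : Fintype.card F = q ^ 2) {n : ℕ} (d : Fin n → F) (hd : ∀ i, σ (d i) = d i) :
    (#{x : Fin n → F | ∑ i, d i * x i ^ (q + 1) = 0} : ℤ) * q =
      q ^ (2 * n) + (-1) ^ #{i | d i ≠ 0} * (q - 1) * q ^ (2 * n - #{i | d i ≠ 0}) := by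
  induction n with
  | zero => simp
  | succ n ih =>
    set S : (Fin n → F) → F := fun y => ∑ i, d i.succ * y i ^ (q + 1)
    have hS : ∀ y, σ (S y) = S y := fun y => by
      simp only [S, map_sum, map_mul, hd, map_pow_succ_eq_self hσ hF]
    have hsplit : #{x : Fin (n + 1) → F | ∑ i, d i * x i ^ (q + 1) = 0} =
        ∑ y, #{c | d 0 * c ^ (q + 1) + S y = 0} := by
      simp only [Fin.sum_univ_succ]
      exact card_filter_fin_succ (fun c y => d 0 * c ^ (q + 1) + S y = 0)
    rw [hsplit, Fin.card_filter_univ_succ (fun i => d i ≠ 0)]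
    set r := #{i | d (Fin.succ i) ≠ 0}
    have ih' : (#{y | S y = 0} : ℤ) * q = q ^ (2 * n) + (-1) ^ r * (q - 1) * q ^ (2 * n - r) :=
      ih _ fun i => hd i.succ
    have hr : r ≤ n := (card_filter_le _ _).trans (by simp)
    have hcard : (Fintype.card (Fin n → F) : ℤ) = q ^ (2 * n) := by
      rw [Fintype.card_fun, Fintype.card_fin, hF, ← pow_mul]
      push_cast
      rfl
    simp only [card_filter_mul_pow_succ_add_eq_zero hσ hF (hd 0) (hS _)]
    push_cast
    by_cases hd₀ : d 0 = 0
    · simp only [hd₀, if_true, ne_eq, not_true_eq_false, if_false]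
      rw [sum_ite_eq_card_filter_mul_add, hcard, mul_add 2 n 1, pow_add,
        show 2 * n + 2 * 1 - r = 2 * n - r + 2 by omega, pow_add]
      linear_combination (q : ℤ) ^ 2 * ih'
    · simp only [hd₀, if_false, ne_eq, not_false_eq_true, if_true]
      rw [sum_ite_eq_card_filter_mul_add, hcard, mul_add 2 n 1, pow_add,
        show 2 * n + 2 * 1 - (r + 1) = 2 * n - r + 1 by omega, pow_succ]
      linear_combination (-(q : ℤ)) * ih'

end DiagonalForm

section Sesquilinear

variable {K V : Type*} [Field K] [AddCommGroup V] [Module K V] {σ : K →+* K}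

theorem LinearMap.IsSymm.exists_apply_self_ne_zero {B : V →ₛₗ[σ] V →ₗ[K] K} (hB : B.IsSymm)
    (hB₀ : B ≠ 0) {c : K} (hc : σ c ≠ c) : ∃ x, B x x ≠ 0 := by
  by_contra! h
  refine hB₀ (LinearMap.ext₂ fun x y => ?_)
  have h₁ := h (x + y)
  have h₂ := h (c • x + y)
  simp only [map_add, map_smulₛₗ, LinearMap.add_apply, LinearMap.smul_apply, smul_eq_mul,
    h x, h y, ← hB.eq x y] at h₁ h₂
  have : (σ c - c) * B x y = 0 := by linear_combination h₂ - c * h₁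
  simpa [sub_ne_zero.mpr hc] using this

theorem LinearMap.IsSymm.exists_orthogonal_basis [FiniteDimensional K V]
    {B : V →ₛₗ[σ] V →ₗ[K] K} (hB : B.IsSymm) {c : K} (hc : σ c ≠ c) {n : ℕ}
    (hn : finrank K V = n) : ∃ v : Basis (Fin n) K V, B.IsOrthoᵢ v := by
  induction n generalizing V with
  | zero => exact ⟨basisOfFinrankZero hn, fun i => i.elim0⟩
  | succ n ih =>
    obtain rfl | hB₀ := eq_or_ne B 0
    · exact ⟨finBasisOfFinrankEq K V hn, fun _ _ _ => rfl⟩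
    obtain ⟨x, hx⟩ := hB.exists_apply_self_ne_zero hB₀ hc
    have hW : finrank K (LinearMap.ker (B x)) = n := by
      have hsurj : LinearMap.range (B x) = ⊤ :=
        LinearMap.range_eq_top.mpr fun a => ⟨(a / B x x) • x, by simp [hx]⟩
      have := (B x).finrank_range_add_finrank_ker
      rw [hsurj, finrank_top, finrank_self] at this
      omega
    obtain ⟨v, hv⟩ := ih (hB.domRestrict _) hW
    refine ⟨Basis.mkFinCons x v (fun a y hy hay => ?_) (fun z => ⟨-(B x z / B x x), ?_⟩), ?_⟩
    · have := congrArg (B x) hay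
      rw [map_add, map_smul, LinearMap.mem_ker.mp hy, add_zero, smul_eq_mul, map_zero] at this
      exact (mul_eq_zero.mp this).resolve_right hx
    · simp [LinearMap.mem_ker, hx]
    · rw [LinearMap.isOrthoᵢ_def, Basis.coe_mkFinCons]
      intro i j hij
      induction i using Fin.cases <;> induction j using Fin.cases
      · exact absurd rfl hij
      · exact (v _).2
      · exact hB.eq_iff.mp (v _).2
      · exact hv (ne_of_apply_ne Fin.succ hij)

variable {ι : Type*} [Fintype ι] [DecidableEq ι]

theorem LinearMap.toMatrix₂_mul_basis_toMatrixₛₗ (b c : Basis ι K V) (B : V →ₛₗ[σ] V →ₗ[K] K) :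
    ((b.toMatrix c).map σ)ᵀ * LinearMap.toMatrix₂ b b B * b.toMatrix c =
      LinearMap.toMatrix₂ c c B := by
  ext i j
  rw [LinearMap.toMatrix₂_apply c c, apply_eq_dotProduct_toMatrix₂_mulVec b b, Matrix.mul_assoc]
  simp [Matrix.mul_apply, dotProduct, mulVec, Basis.toMatrix_apply]

theorem LinearMap.IsOrthoᵢ.toMatrix₂_eq_diagonal {B : V →ₛₗ[σ] V →ₗ[K] K} {v : Basis ι K V}
    (hv : B.IsOrthoᵢ v) : LinearMap.toMatrix₂ v v B = diagonal fun i => B (v i) (v i) := by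
  ext i j
  rw [LinearMap.toMatrix₂_apply, diagonal_apply]
  split_ifs with h
  · rw [h]
  · exact hv h

theorem LinearMap.IsOrthoᵢ.apply_self_eq_sum {B : V →ₛₗ[σ] V →ₗ[K] K} {v : Basis ι K V}
    (hv : B.IsOrthoᵢ v) (x : V) :
    B x x = ∑ i, B (v i) (v i) * σ (v.repr x i) * v.repr x i := by
  rw [apply_eq_dotProduct_toMatrix₂_mulVec v v, hv.toMatrix₂_eq_diagonal]
  simp only [dotProduct, mulVec_diagonal, Function.comp_apply, RingHom.id_apply]
  exact sum_congr rfl fun i _ => by ring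

end Sesquilinear

section HermitianMatrix

variable {K : Type*} [Field K] {n : Type*} [Fintype n] [DecidableEq n] (σ : K →+* K)

theorem Matrix.rank_map_transpose_mul_mul_of_isUnit_det {P : Matrix n n K} (hP : IsUnit P.det)
    (A : Matrix n n K) : ((P.map σ)ᵀ * A * P).rank = A.rank := by
  have hP' : IsUnit (P.map σ)ᵀ.det := by
    rw [det_transpose, ← RingHom.mapMatrix_apply, ← RingHom.map_det]
    exact hP.map σ
  rw [rank_mul_eq_left_of_isUnit_det _ _ hP, rank_mul_eq_right_of_isUnit_det _ _ hP']

theorem Matrix.toLinearMapₛₗ₂_basisFun_apply (A : Matrix n n K) (x y : n → K) :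
    Matrix.toLinearMapₛₗ₂ σ (Pi.basisFun K n) (Pi.basisFun K n) A x y =
      (σ ∘ x) ⬝ᵥ (A *ᵥ y) := by
  simpa [Pi.basisFun_equivFun] using
    (dotProduct_toMatrix₂_mulVec (Pi.basisFun K n) (Pi.basisFun K n)
      (Matrix.toLinearMapₛₗ₂ σ (Pi.basisFun K n) (Pi.basisFun K n) A) x y).symm

theorem Matrix.isSymm_toLinearMapₛₗ₂_basisFun {A : Matrix n n K} (hσ : Function.Involutive σ)
    (hA : (A.map σ)ᵀ = A) :
    (Matrix.toLinearMapₛₗ₂ σ (Pi.basisFun K n) (Pi.basisFun K n) A).IsSymm := by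
  refine ⟨fun x y => ?_⟩
  rw [toLinearMapₛₗ₂_basisFun_apply, toLinearMapₛₗ₂_basisFun_apply, RingHom.map_dotProduct]
  have hx : σ ∘ σ ∘ x = x := funext fun i => hσ (x i)
  have hy : σ ∘ (A *ᵥ y) = A.map σ *ᵥ (σ ∘ y) := funext (RingHom.map_mulVec σ A y)
  rw [hx, hy, dotProduct_mulVec, dotProduct_comm, ← mulVec_transpose, hA]

end HermitianMatrix

theorem ncard_lines_mul_card_sub_one_add_one {K V : Type*} [Field K] [Fintype K]
    [AddCommGroup V] [Module K V] [Fintype V] [DecidableEq V] (P : V → Prop) [DecidablePred P]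
    (hP₀ : P 0) (hP : ∀ (c : K) x, P x → P (c • x)) :
    {L : Submodule K V | finrank K L = 1 ∧ ∀ x ∈ L, P x}.ncard * (Fintype.card K - 1) + 1 =
      #{x | P x} := by
  classical
  have hfin : {L : Submodule K V | finrank K L = 1 ∧ ∀ x ∈ L, P x}.Finite := Set.toFinite _
  have hzero : #{x | P x} = #{x | x ≠ 0 ∧ P x} + 1 := by
    rw [← card_insert_of_notMem (s := ({x | x ≠ 0 ∧ P x} : Finset V)) (a := 0) (by simp)]
    congr 1
    ext x
    by_cases hx : x = 0 <;> simp [hx, hP₀]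
  rw [hzero, Set.ncard_eq_toFinset_card _ hfin, ← smul_eq_mul, ← sum_const,
    card_eq_sum_card_fiberwise (f := fun x => K ∙ x) (t := hfin.toFinset)]
  · congr 1
    refine sum_congr rfl fun L hL => ?_
    obtain ⟨hL₁, hLP⟩ := hfin.mem_toFinset.mp hL
    have hfiber : ({x | x ≠ 0 ∧ P x} : Finset V).filter (fun x => K ∙ x = L) =
        ({x | x ∈ L} : Finset V).erase 0 := by
      ext x
      simp only [mem_filter, mem_univ, true_and, mem_erase]
      constructor
      · rintro ⟨⟨hx, -⟩, rfl⟩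
        exact ⟨hx, Submodule.mem_span_singleton_self x⟩
      · rintro ⟨hx, hxL⟩
        refine ⟨⟨hx, hLP x hxL⟩, Submodule.eq_of_le_of_finrank_eq ?_ ?_⟩
        · exact (Submodule.span_singleton_le_iff_mem x L).mpr hxL
        · rw [finrank_span_singleton hx, hL₁]
    rw [hfiber, card_erase_of_mem (by simp [L.zero_mem]), ← Fintype.card_subtype,
      card_eq_pow_finrank (K := K) (V := L), hL₁, pow_one]
  · rintro x hx
    obtain ⟨hx, hPx⟩ := by simpa using hx
    refine hfin.mem_toFinset.mpr ⟨finrank_span_singleton hx, fun y hy => ?_⟩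
    obtain ⟨c, rfl⟩ := Submodule.mem_span_singleton.mp hy
    exact hP c x hPx

theorem card_filter_dotProduct_mulVec_eq_zero {F : Type*} [Field F] [Fintype F] [DecidableEq F]
    {q : ℕ} {σ : F →+* F} (hσ : ∀ x, σ x = x ^ q) (hF : Fintype.card F = q ^ 2) {n : ℕ}
    (A : Matrix (Fin n) (Fin n) F) (hA : (A.map σ)ᵀ = A) :
    (#{x : Fin n → F | (σ ∘ x) ⬝ᵥ (A *ᵥ x) = 0} : ℤ) * q =
      q ^ (2 * n) + (-1) ^ A.rank * (q - 1) * q ^ (2 * n - A.rank) := by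
  set e := Pi.basisFun F (Fin n)
  set B := Matrix.toLinearMapₛₗ₂ σ e e A
  have hB : B.IsSymm := isSymm_toLinearMapₛₗ₂_basisFun σ
    (fun x => by rw [hσ, hσ, pow_pow_eq_self_of_card_eq_sq hF]) hA
  have hform : ∀ x, (σ ∘ x) ⬝ᵥ (A *ᵥ x) = B x x :=
    fun x => (toLinearMapₛₗ₂_basisFun_apply σ A x x).symm
  obtain ⟨c, hc⟩ := exists_pow_ne_self hF
  obtain ⟨v, hv⟩ := hB.exists_orthogonal_basis (c := c) (by rwa [hσ]) (finrank_fin_fun F)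
  have hcount : #{x : Fin n → F | B x x = 0} =
      #{y : Fin n → F | ∑ i, B (v i) (v i) * y i ^ (q + 1) = 0} :=
    card_equiv v.equivFun fun x => by
      simp only [mem_filter, mem_univ, true_and]
      rw [hv.apply_self_eq_sum]
      simp only [hσ, pow_succ, mul_assoc]
      rfl
  have hrank : A.rank = #{i | B (v i) (v i) ≠ 0} := by
    have hcongr := LinearMap.toMatrix₂_mul_basis_toMatrixₛₗ e v B
    rw [LinearMap.toMatrix₂_toLinearMapₛₗ₂, hv.toMatrix₂_eq_diagonal] at hcongr
    rw [← rank_map_transpose_mul_mul_of_isUnit_det σ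
      (isUnit_det_of_right_inverse (e.toMatrix_mul_toMatrix_flip v)) A, hcongr, rank_diagonal,
      Fintype.card_subtype]
  simp only [hform]
  rw [hcount, hrank]
  exact card_filter_sum_mul_pow_succ_eq_zero hσ hF _ fun i => hB.eq _ _

/-- The number of projective points `⟨x⟩` of `PG(n-1, q^2)` lying on the
hermitian variety of a hermitian matrix `A` of rank `r` equals
`(q^(2n-1) + (-1)^r (q-1) q^(2n-r-1) - 1) / (q^2 - 1)`. -/
theorem card_hermitian_variety
    (q : ℕ) (hq : IsPrimePow q)
    (F : Type) [Field F] [Fintype F]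
    (hF : Fintype.card F = q ^ 2) (n : ℕ) (hn : 1 ≤ n)
    (A : Matrix (Fin n) (Fin n) F)
    (hHerm : (A.map (· ^ q))ᵀ = A) (r : ℕ) (hr : A.rank = r) :
    ({L : Submodule F (Fin n → F) |
        Module.finrank F L = 1 ∧
        ∀ x ∈ L, (fun i => (x i) ^ q) ⬝ᵥ (A *ᵥ x) = 0}.ncard : ℤ) *
      ((q : ℤ) ^ 2 - 1) =
      (q : ℤ) ^ (2 * n - 1) + (-1) ^ r * ((q : ℤ) - 1) * (q : ℤ) ^ (2 * n - r - 1) - 1 := by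
  classical
  obtain ⟨σ, hσ⟩ := exists_ringHom_apply_eq_pow hq hF
  have hconj : ∀ x : Fin n → F, (fun i => x i ^ q) = σ ∘ x := fun x => funext fun i => (hσ _).symm
  have hA : (A.map σ)ᵀ = A := by rwa [show ⇑σ = (· ^ q) from funext hσ]
  have hcount := card_filter_dotProduct_mulVec_eq_zero hσ hF A hA
  have hlines := ncard_lines_mul_card_sub_one_add_one (K := F)
    (fun x : Fin n → F => (σ ∘ x) ⬝ᵥ (A *ᵥ x) = 0) (by simp) fun c x hx => by
      have hσc : σ ∘ (c • x) = σ c • (σ ∘ x) := funext fun i => by simp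
      rw [hσc, mulVec_smul, smul_dotProduct, dotProduct_smul, hx, smul_zero, smul_zero]
  simp only [hconj]
  have hrn : r ≤ n := hr ▸ A.rank_le_width.trans (by simp)
  have hq₀ : (q : ℤ) ≠ 0 := by have := two_le_of_card_eq_sq hF; omega
  replace hlines := congrArg (Nat.cast : ℕ → ℤ) hlines
  push_cast [hF, Nat.one_le_pow 2 q (by omega)] at hlines
  obtain ⟨a, ha⟩ : ∃ a, 2 * n = a + 1 := ⟨2 * n - 1, by omega⟩
  obtain ⟨b, hb⟩ : ∃ b, 2 * n - r = b + 1 := ⟨2 * n - r - 1, by omega⟩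
  rw [hr, hb, ha] at hcount
  rw [show 2 * n - 1 = a by omega, show 2 * n - r - 1 = b by omega]
  apply mul_right_cancel₀ hq₀
  linear_combination (q : ℤ) * hlines + hcount
end

section
/- Let q be a prime power with q ≥ 3, and let A, B be adjacent invertible n×n hermitian matrices over F_{q^2} (i.e., rank(A − B) = 1). Write B − A = x x* up to a scalar, i.e., B = A + μ x x* for some nonzero μ ∈ F_q and x ∈ F_{q^2}^n. Then the set {A + λ x x* : λ ∈ F_q, A + λ x x* invertible} has exactly q elements if x* A^{-1} x = 0, and exactly q − 1 elements if x* A^{-1} x ≠ 0. -/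
/-!
By the matrix determinant lemma, `det (A + λ x x*) = det A * (1 + λ c)` with
`c = x* A⁻¹ x`, and `c` lies in the fixed field `F_q` because `A⁻¹` is again hermitian.
So the clique is in bijection with the `λ ∈ F_q` other than the root `-c⁻¹` of `1 + λ c`,
which exists exactly when `c ≠ 0` and then lies in `F_q`.
-/

open Matrix

theorem ncard_setOf_pow_eq_self {F : Type*} [Field F] [Fintype F] {q : ℕ}
    (hF : Fintype.card F = q ^ 2) : {a : F | a ^ q = a}.ncard = q := by
  classical
  have hq : 1 < q := by
    have := Fintype.one_lt_card (α := F)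
    rwa [hF, Nat.one_lt_pow_iff two_ne_zero] at this
  obtain ⟨k, rfl⟩ : ∃ k, q = k + 1 := ⟨q - 1, by omega⟩
  have hk : 0 < k := by omega
  -- The nonzero solutions of `a ^ (k + 1) = a` are the `k`-th roots of unity, and `k` divides
  -- the order `(k + 2) * k` of the cyclic group `Fˣ`.
  obtain ⟨g, hg⟩ := IsCyclic.exists_ofOrder_eq_natCard (α := Fˣ)
  have hcardUnits : Nat.card Fˣ = (k + 2) * k := by
    rw [Nat.card_eq_fintype_card, Fintype.card_units, hF]
    ring_nf; omega
  have hprim : IsPrimitiveRoot (g : F) ((k + 2) * k) := by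
    rw [← hcardUnits, ← hg, ← orderOf_units]
    exact IsPrimitiveRoot.orderOf _
  have hroots : {a : F | a ^ (k + 1) = a} =
      insert 0 (Polynomial.nthRootsFinset k (1 : F) : Set F) := by
    ext a
    rw [Set.mem_ofPred_eq, Set.mem_insert_iff, Finset.mem_coe,
      Polynomial.mem_nthRootsFinset hk, pow_succ]
    nth_rw 3 [← one_mul a]
    rw [mul_eq_mul_right_iff, or_comm]
  have hzero : (0 : F) ∉ Polynomial.nthRootsFinset k (1 : F) := by
    simp [Polynomial.mem_nthRootsFinset hk, zero_pow hk.ne']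
  rw [hroots, ← Finset.coe_insert, Set.ncard_coe_finset, Finset.card_insert_of_notMem hzero,
    (hprim.pow (by positivity) rfl).card_nthRootsFinset]

theorem exists_ringHom_eq_pow_of_card_eq_sq {F : Type*} [Field F] [Fintype F] {q : ℕ}
    (hF : Fintype.card F = q ^ 2) : ∃ σ : F →+* F, ∀ a, σ a = a ^ q := by
  obtain ⟨p, hchar, m, hp, hcard⟩ := FiniteField.card' F
  have : Fact p.Prime := ⟨hp⟩
  have hq : q ∣ p ^ (m : ℕ) := hcard ▸ hF ▸ dvd_pow_self q two_ne_zero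
  obtain ⟨i, -, rfl⟩ := (Nat.dvd_prime_pow hp).mp hq
  exact ⟨iterateFrobenius F p i, fun _ => rfl⟩

section Conjugation

variable {K : Type*} [Field K] {n : Type*} [Fintype n]

theorem transpose_map_inv_of_transpose_map [DecidableEq n] (σ : K →+* K) {A : Matrix n n K}
    (hA : IsUnit A.det) (hσA : (A.map σ)ᵀ = A) : (A⁻¹.map σ)ᵀ = A⁻¹ := by
  have hmap_inv : (A.map σ)⁻¹ = A⁻¹.map σ :=
    inv_eq_left_inv <| by
      rw [← Matrix.map_mul, nonsing_inv_mul A hA, Matrix.map_one _ σ.map_zero σ.map_one]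
  rw [← hmap_inv, transpose_nonsing_inv, hσA]

theorem map_dotProduct_mulVec_of_transpose_map (σ : K →+* K) (hσ : Function.Involutive σ)
    {M : Matrix n n K} (hσM : (M.map σ)ᵀ = M) (x : n → K) :
    σ ((σ ∘ x) ⬝ᵥ (M *ᵥ x)) = (σ ∘ x) ⬝ᵥ (M *ᵥ x) := by
  have hM : M.map σ = Mᵀ := by rw [← transpose_transpose (M.map σ), hσM]
  have hx : σ ∘ σ ∘ x = x := funext fun i => hσ (x i)
  have hMx : σ ∘ (M *ᵥ x) = M.map σ *ᵥ (σ ∘ x) := funext (RingHom.map_mulVec σ M x)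
  rw [RingHom.map_dotProduct, hMx, hM, hx, mulVec_transpose,
    dotProduct_comm, dotProduct_mulVec]

end Conjugation

theorem det_add_smul_vecMulVec {α : Type*} [CommRing α] {m : Type*} [Fintype m] [DecidableEq m]
    {A : Matrix m m α} (hA : IsUnit A.det) (t : α) (u v : m → α) :
    (A + t • vecMulVec u v).det = A.det * (1 + t * (v ⬝ᵥ (A⁻¹ *ᵥ u))) := by
  rw [← smul_vecMulVec, vecMulVec_eq Unit, det_add_replicateCol_mul_replicateRow hA,
    Matrix.mul_assoc, ← replicateCol_mulVec, replicateRow_mul_replicateCol,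
    det_unique (n := Unit)]
  simp [mulVec_smul]

theorem setOf_isUnit_det_add_smul_vecMulVec {K : Type*} [Field K] {m : Type*} [Fintype m]
    [DecidableEq m] {A : Matrix m m K} (hA : IsUnit A.det) (P : K → Prop) (u v : m → K) :
    {M | ∃ t, P t ∧ M = A + t • vecMulVec u v ∧ IsUnit M.det} =
      (fun t => A + t • vecMulVec u v) '' {t | P t ∧ 1 + t * (v ⬝ᵥ (A⁻¹ *ᵥ u)) ≠ 0} := by
  have hdet (t : K) :
      IsUnit (A + t • vecMulVec u v).det ↔ 1 + t * (v ⬝ᵥ (A⁻¹ *ᵥ u)) ≠ 0 := by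
    rw [det_add_smul_vecMulVec hA, isUnit_iff_ne_zero, mul_ne_zero_iff, and_iff_right hA.ne_zero]
  ext M
  constructor
  · rintro ⟨t, ht, rfl, hM⟩
    exact ⟨t, ⟨ht, (hdet t).mp hM⟩, rfl⟩
  · rintro ⟨t, ⟨ht, hM⟩, rfl⟩
    exact ⟨t, ht, rfl, (hdet t).mpr hM⟩

theorem ncard_setOf_and_one_add_mul_ne_zero {K : Type*} [Field K] [DecidableEq K] (P : K → Prop)
    (c : K) (hc : c ≠ 0 → P (-c⁻¹)) :
    {t | P t ∧ 1 + t * c ≠ 0}.ncard =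
      if c = 0 then {t | P t}.ncard else {t | P t}.ncard - 1 := by
  split_ifs with hc0
  · simp [hc0]
  · have hroot : {t | P t ∧ 1 + t * c ≠ 0} = {t | P t} \ {-c⁻¹} := by
      ext t
      simp only [Set.mem_ofPred_eq, Set.mem_sdiff, Set.mem_singleton_iff, and_congr_right_iff]
      intro _
      constructor
      · rintro h rfl
        exact h (by rw [neg_mul, inv_mul_cancel₀ hc0, add_neg_cancel])
      · intro h h0
        exact h (by field_simp; linear_combination h0)
    rw [hroot]
    exact Set.ncard_sdiff_singleton_of_mem (hc hc0)

theorem maximal_clique_card_general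
    (q : ℕ)
    (F : Type) [Field F] [Fintype F] [DecidableEq F]
    (hF : Fintype.card F = q ^ 2) (n : ℕ)
    (A : Matrix (Fin n) (Fin n) F)
    (hHerm : (A.map (· ^ q))ᵀ = A) (hA : IsUnit A.det)
    (x : Fin n → F) (hx : x ≠ 0) :
    {M : Matrix (Fin n) (Fin n) F | ∃ lam : F, lam ^ q = lam ∧
        M = A + lam • Matrix.vecMulVec x (fun i => (x i) ^ q) ∧
        IsUnit M.det}.ncard =
      if (fun i => (x i) ^ q) ⬝ᵥ (A⁻¹ *ᵥ x) = 0 then q else q - 1 := by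
  obtain ⟨σ, hσ⟩ := exists_ringHom_eq_pow_of_card_eq_sq hF
  have hσσ : Function.Involutive σ := fun a => by
    rw [hσ, hσ, ← pow_mul, ← sq, ← hF, FiniteField.pow_card]
  rw [show (· ^ q) = ⇑σ from funext fun a => (hσ a).symm] at hHerm
  rw [show (fun i => x i ^ q) = σ ∘ x from funext fun i => (hσ (x i)).symm]
  have hc : σ ((σ ∘ x) ⬝ᵥ (A⁻¹ *ᵥ x)) = (σ ∘ x) ⬝ᵥ (A⁻¹ *ᵥ x) :=
    map_dotProduct_mulVec_of_transpose_map σ hσσ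
      (transpose_map_inv_of_transpose_map σ hA hHerm) x
  have hinj : Function.Injective fun t : F => A + t • vecMulVec x (σ ∘ x) :=
    (add_right_injective A).comp (smul_left_injective F (by simpa [funext_iff] using hx))
  rw [setOf_isUnit_det_add_smul_vecMulVec hA, Set.ncard_image_of_injective _ hinj,
    ncard_setOf_and_one_add_mul_ne_zero, ncard_setOf_pow_eq_self hF]
  intro _
  rw [← hσ, map_neg, map_inv₀, hc]

/-- For `q ≥ 3` and adjacent invertible hermitian matrices `A` and
`B = A + μ x x*`, the maximal clique through `A` and `B`, i.e. the set of
invertible matrices `A + λ x x*` with `λ` in the fixed field, has exactly `q`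
elements if `x* A⁻¹ x = 0` and exactly `q - 1` elements otherwise. -/
theorem maximal_clique_card
    (q : ℕ) (hq : IsPrimePow q) (hq3 : 3 ≤ q)
    (F : Type) [Field F] [Fintype F] [DecidableEq F]
    (hF : Fintype.card F = q ^ 2) (n : ℕ)
    (A : Matrix (Fin n) (Fin n) F)
    (hHerm : (A.map (· ^ q))ᵀ = A) (hA : IsUnit A.det)
    (x : Fin n → F) (hx : x ≠ 0) (μ : F) (hμ : μ ^ q = μ) (hμ0 : μ ≠ 0)
    (hB : IsUnit (A + μ • Matrix.vecMulVec x (fun i => (x i) ^ q)).det) :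
    {M : Matrix (Fin n) (Fin n) F | ∃ lam : F, lam ^ q = lam ∧
        M = A + lam • Matrix.vecMulVec x (fun i => (x i) ^ q) ∧
        IsUnit M.det}.ncard =
      if (fun i => (x i) ^ q) ⬝ᵥ (A⁻¹ *ᵥ x) = 0 then q else q - 1 :=
  maximal_clique_card_general q F hF n A hHerm hA x hx
end

section
/- Let q be a prime power and x, y ∈ F_{q^2}^n nonzero vectors with x* x = 0 and y* y = 0. Then there exists an n×n matrix P over F_{q^2} with P* P = I and P x = y. -/
/-!
Take any Hermitian form `B` (sesquilinear for an involution `σ`) on which the trace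
`t ↦ t + σ t` maps onto the fixed field. If `B x y ≠ 0`, the hyperbolic plane spanned by `x` and
`y` splits off orthogonally, and the map fixing its complement with `x ↦ y`,
`y ↦ (B x y / σ (B x y)) • x` is an isometry. If `B x y = 0`, pick `w` with `B x w ≠ 0 ≠ B y w`;
surjectivity of the trace makes some `z = w + t • x` isotropic, and we pass through `z`.
Over a field with `q ^ 2` elements `σ a = a ^ q` is such an involution, since `X ^ q + X` has
fewer than `q ^ 2` roots.
-/

open Matrix Polynomial

section Sesquilinear

variable {F V : Type*} [Field F] [AddCommGroup V] [Module F V] {σ : F →+* F}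
  {B : V →ₛₗ[σ] V →ₗ[F] F}

lemma exists_add_map_eq_of_map_eq (hσ : Function.Involutive σ) {e : F} (he : e + σ e ≠ 0)
    {b : F} (hb : σ b = b) : ∃ t, t + σ t = b :=
  ⟨b * e / (e + σ e), by
    rw [map_div₀, map_mul, map_add, hb, hσ e, add_comm (σ e) e]
    field_simp⟩

lemma LinearMap.exists_apply_ne_zero_and_apply_ne_zero {R M N : Type*} [Semiring R]
    [AddCommMonoid M] [AddCommMonoid N] [Module R M] [Module R N] {f g : M →ₗ[R] N}
    (hf : f ≠ 0) (hg : g ≠ 0) : ∃ w, f w ≠ 0 ∧ g w ≠ 0 := by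
  obtain ⟨u, hu⟩ := DFunLike.ne_iff.mp hf
  obtain ⟨v, hv⟩ := DFunLike.ne_iff.mp hg
  by_cases hgu : g u = 0
  · by_cases hfv : f v = 0
    · exact ⟨u + v, by simpa [hfv] using hu, by simpa [hgu] using hv⟩
    · exact ⟨v, hfv, hv⟩
  · exact ⟨u, hu, hgu⟩

lemma exists_isotropic_add_smul (hB : B.IsSymm) (htr : ∀ b, σ b = b → ∃ t, t + σ t = b)
    {x w : V} (hx : B x x = 0) (hxw : B x w ≠ 0) : ∃ t : F, B (w + t • x) (w + t • x) = 0 := by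
  have hwx : σ (B w x) = B x w := hB.eq w x
  have hr : B w x ≠ 0 := fun h => hxw (by rw [← hwx, h, map_zero])
  obtain ⟨t, ht⟩ := htr (-B w w) (by rw [map_neg, hB.eq])
  refine ⟨t / B w x, ?_⟩
  simp only [map_add, map_smulₛₗ, LinearMap.add_apply, LinearMap.smul_apply, smul_eq_mul, hx,
    map_div₀, RingHom.id_apply, mul_zero, add_zero]
  rw [div_mul_cancel₀ _ hr, hwx, div_mul_cancel₀ _ hxw]
  linear_combination ht

lemma exists_isometry_apply_eq_of_apply_ne_zero (hB : B.IsSymm) {x y : V} (hx : B x x = 0)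
    (hy : B y y = 0) (hxy : B x y ≠ 0) :
    ∃ T : V →ₗ[F] V, (∀ u v, B (T u) (T v) = B u v) ∧ T x = y := by
  have hyx : B y x = σ (B x y) := (hB.eq x y).symm
  have hσa : σ (σ (B x y)) = B x y := by rw [← hyx, hB.eq]
  have hσa₀ : σ (B x y) ≠ 0 := by rwa [_root_.map_ne_zero]
  -- `(B y v / σ (B x y), B x v / B x y)` are the coordinates in `(x, y)` of the projection of `v`
  -- onto `span {x, y}`
  refine ⟨LinearMap.id + (σ (B x y))⁻¹ • (B y).smulRight (y - x) +
    (B x y)⁻¹ • (B x).smulRight ((B x y / σ (B x y)) • x - y), ?_, ?_⟩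
  · intro u v
    have hxu := hB.eq x u
    have hyu := hB.eq y u
    simp only [LinearMap.add_apply, LinearMap.smul_apply, LinearMap.smulRight_apply,
      LinearMap.id_apply, map_add, map_sub, map_smulₛₗ, LinearMap.sub_apply, smul_eq_mul, map_inv₀,
      map_div₀, RingHom.id_apply, hx, hy, hyx, hσa, hxu, hyu]
    field_simp
    ring
  · simp [hyx, hx, hσa₀]

theorem exists_isometry_apply_eq (hB : B.IsSymm) (hsep : B.SeparatingLeft)
    (htr : ∀ b, σ b = b → ∃ t, t + σ t = b) {x y : V} (hx0 : x ≠ 0) (hy0 : y ≠ 0)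
    (hx : B x x = 0) (hy : B y y = 0) :
    ∃ T : V →ₗ[F] V, (∀ u v, B (T u) (T v) = B u v) ∧ T x = y := by
  by_cases hxy : B x y ≠ 0
  · exact exists_isometry_apply_eq_of_apply_ne_zero hB hx hy hxy
  have hyx : B y x = 0 := by rw [← hB.eq, not_not.mp hxy, map_zero]
  have hBne {v : V} (hv : v ≠ 0) : B v ≠ 0 := fun h => hv (hsep v fun w => by simp [h])
  obtain ⟨w, hxw, hyw⟩ := LinearMap.exists_apply_ne_zero_and_apply_ne_zero (hBne hx0) (hBne hy0)
  obtain ⟨t, hz⟩ := exists_isotropic_add_smul hB htr hx hxw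
  have hxz : B x (w + t • x) ≠ 0 := by simpa [hx] using hxw
  have hzy : B (w + t • x) y ≠ 0 := by
    rw [← hB.eq, _root_.map_ne_zero]
    simpa [hyx] using hyw
  obtain ⟨T₁, hT₁, hT₁x⟩ := exists_isometry_apply_eq_of_apply_ne_zero hB hx hz hxz
  obtain ⟨T₂, hT₂, hT₂z⟩ := exists_isometry_apply_eq_of_apply_ne_zero hB hz hy hzy
  exact ⟨T₂ ∘ₗ T₁, fun u v => (hT₂ _ _).trans (hT₁ u v), by simp [hT₁x, hT₂z]⟩

end Sesquilinear

section StandardForm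

variable {F ι : Type*} [Field F] [Fintype ι] (σ : F →+* F)

def hermForm : (ι → F) →ₛₗ[σ] (ι → F) →ₗ[F] F :=
  LinearMap.mk₂'ₛₗ σ (RingHom.id F) (fun u v => (fun i => σ (u i)) ⬝ᵥ v)
    (fun u u' v => by simp [dotProduct, add_mul, Finset.sum_add_distrib])
    (fun c u v => by simp [dotProduct, Finset.mul_sum, mul_assoc])
    (fun u v v' => dotProduct_add _ _ _)
    (fun c u v => dotProduct_smul _ _ _)

lemma hermForm_apply (u v : ι → F) : hermForm σ u v = (fun i => σ (u i)) ⬝ᵥ v := rfl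

lemma hermForm_isSymm (hσ : Function.Involutive σ) : (hermForm σ : (ι → F) →ₛₗ[σ] _).IsSymm :=
  ⟨fun u v => by simp [hermForm_apply, dotProduct, map_sum, hσ _, mul_comm]⟩

variable [DecidableEq ι]

lemma hermForm_single_single (i j : ι) :
    hermForm σ (Pi.single i 1) (Pi.single j 1) = (1 : Matrix ι ι F) i j := by
  simp [hermForm_apply, dotProduct, Pi.single_apply, Matrix.one_apply, eq_comm]

lemma hermForm_separatingLeft : (hermForm σ : (ι → F) →ₛₗ[σ] _).SeparatingLeft := fun u hu =>
  funext fun i => by simpa [hermForm_apply, dotProduct, Pi.single_apply] using hu (Pi.single i 1)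

lemma map_transpose_mul_toMatrix'_eq_one {T : (ι → F) →ₗ[F] (ι → F)}
    (hT : ∀ u v, hermForm σ (T u) (T v) = hermForm σ u v) :
    ((LinearMap.toMatrix' T).map σ)ᵀ * LinearMap.toMatrix' T = 1 := by
  ext i j
  rw [← hermForm_single_single, ← hT]
  simp [hermForm_apply, Matrix.mul_apply, dotProduct, LinearMap.toMatrix'_apply]

end StandardForm

lemma FiniteField.exists_add_pow_ne_zero {F : Type*} [Field F] [Fintype F] {q : ℕ} (hq : 2 ≤ q)
    (hcard : q < Fintype.card F) : ∃ e : F, e + e ^ q ≠ 0 := by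
  by_contra! h
  have hdeg : (X ^ q + X : F[X]).natDegree = q := by
    rw [natDegree_add_eq_left_of_natDegree_lt] <;> simp; omega
  have hne : (X ^ q + X : F[X]) ≠ 0 := ne_zero_of_natDegree_gt (n := 0) (by omega)
  have := card_le_degree_of_subset_roots (Z := (Finset.univ : Finset F)) (p := X ^ q + X)
    fun e _ => (mem_roots hne).2 (by simp [add_comm, h e])
  simp only [Finset.card_univ, hdeg] at this
  omega

/-- Any two nonzero isotropic vectors over the field with `q^2` elements are
related by a unitary matrix. -/
theorem unitary_transitive_on_isotropic
    (q : ℕ) (hq : IsPrimePow q)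
    (F : Type) [Field F] [Fintype F]
    (hF : Fintype.card F = q ^ 2) (n : ℕ)
    (x y : Fin n → F) (hx0 : x ≠ 0) (hy0 : y ≠ 0)
    (hx : (fun i => (x i) ^ q) ⬝ᵥ x = 0)
    (hy : (fun i => (y i) ^ q) ⬝ᵥ y = 0) :
    ∃ P : Matrix (Fin n) (Fin n) F,
      (P.map (· ^ q))ᵀ * P = 1 ∧ P *ᵥ x = y := by
  have hq2 := hq.two_le
  obtain ⟨p, k, hp, -, rfl⟩ := hq
  have : Fact p.Prime := ⟨hp.nat_prime⟩
  have : CharP F p := charP_of_card_eq_prime_pow (f := k * 2) (by rw [hF, pow_mul])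
  let σ := iterateFrobenius F p k
  have hσ : Function.Involutive σ := fun a => by
    rw [iterateFrobenius_def, iterateFrobenius_def, ← pow_mul, ← sq, ← hF, FiniteField.pow_card]
  obtain ⟨e, he⟩ := FiniteField.exists_add_pow_ne_zero hq2
    (by rw [hF]; exact lt_self_pow₀ (by omega) one_lt_two)
  obtain ⟨T, hT, rfl⟩ := exists_isometry_apply_eq (hermForm_isSymm σ hσ)
    (hermForm_separatingLeft σ) (fun _ => exists_add_map_eq_of_map_eq hσ he) hx0 hy0 hx hy
  exact ⟨LinearMap.toMatrix' T, map_transpose_mul_toMatrix'_eq_one σ hT,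
    LinearMap.toMatrix'_mulVec T x⟩
end

section
/- Let q be a prime power, n ≥ 2, and suppose x_1, x_2, x_3, x_4 ∈ F_{q^2}^n satisfy x_i* x_i = 0 for all i and x_1* x_4 ≠ 0. Then there exist a_2, a_3, a_4 ∈ F_{q^2}, not all zero, such that for every a_1 ∈ F_{q^2}, setting v = a_1 x_1 + a_2 x_2 + a_3 x_3 + a_4 x_4, one has v* v = 0 and x_1* v = 0. -/
open Matrix

-- norm surjectivity onto fixed field
lemma norm_surj_aux (q : ℕ) (hq : 2 ≤ q) (F : Type) [Field F] [Fintype F]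
    (hF : Fintype.card F = q ^ 2) (t : F) (ht : t ^ q = t) :
    ∃ b : F, b ^ (q + 1) = t := by
  classical
  rcases eq_or_ne t 0 with rfl | ht0
  · exact ⟨0, by simp⟩
  · obtain ⟨g, hg⟩ := IsCyclic.exists_generator (α := Fˣ)
    have hcard : Fintype.card Fˣ = q ^ 2 - 1 := by rw [Fintype.card_units, hF]
    have horder : orderOf g = q ^ 2 - 1 := by
      rw [orderOf_eq_card_of_forall_mem_zpowers hg, Nat.card_eq_fintype_card, hcard]
    set u : Fˣ := Units.mk0 t ht0 with hu_def
    obtain ⟨m, hm'⟩ : u ∈ Submonoid.powers g := mem_powers_iff_mem_zpowers.2 (hg u)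
    have hm : g ^ m = u := hm'
    have htq : t ^ (q - 1) = 1 := by
      have h1 : t ^ (q - 1) * t = 1 * t := by
        rw [← pow_succ, show q - 1 + 1 = q by omega, ht, one_mul]
      exact mul_right_cancel₀ ht0 h1
    have huq : u ^ (q - 1) = 1 := by
      ext
      push_cast [hu_def]
      exact htq
    have hdvd1 : q ^ 2 - 1 ∣ m * (q - 1) := by
      rw [← horder]
      apply orderOf_dvd_of_pow_eq_one
      rw [pow_mul, hm, huq]
    have hfac : (q + 1) * (q - 1) = q ^ 2 - 1 := by
      have e : (q + 1) * (q - 1) + 1 = q ^ 2 := by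
        obtain ⟨r, rfl⟩ : ∃ r, q = r + 2 := ⟨q - 2, by omega⟩
        rw [show r + 2 - 1 = r + 1 by omega]; ring
      exact Nat.eq_sub_of_add_eq e
    have hdvd2 : q + 1 ∣ m := by
      rw [← hfac] at hdvd1
      exact (Nat.mul_dvd_mul_iff_right (show 0 < q - 1 by omega)).1 hdvd1
    refine ⟨((g ^ (m / (q + 1)) : Fˣ) : F), ?_⟩
    have : (g ^ (m / (q + 1))) ^ (q + 1) = g ^ m := by
      rw [← pow_mul, Nat.div_mul_cancel hdvd2]
    calc ((g ^ (m / (q + 1)) : Fˣ) : F) ^ (q + 1)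
        = (((g ^ (m / (q + 1))) ^ (q + 1) : Fˣ) : F) := by push_cast; ring
      _ = ((g ^ m : Fˣ) : F) := by rw [this]
      _ = t := by rw [hm]; rfl

lemma scalar_main (F : Type) [Field F] (σ : F →+* F) (hσσ : ∀ x : F, σ (σ x) = x)
    (hnorm : ∀ t : F, σ t = t → ∃ b : F, b * σ b = t)
    (b2 b3 b4 c23 c24 c34 : F) (hb4 : b4 ≠ 0) :
    ∃ a2 a3 a4 : F, ¬ (a2 = 0 ∧ a3 = 0 ∧ a4 = 0) ∧
      a2 * b2 + a3 * b3 + a4 * b4 = 0 ∧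
      σ a2 * a3 * c23 + σ a2 * a4 * c24 + σ a3 * a2 * σ c23 + σ a3 * a4 * c34 +
        σ a4 * a2 * σ c24 + σ a4 * a3 * σ c34 = 0 := by
  obtain ⟨d, hd_def⟩ : ∃ d : F, d = b4⁻¹ := ⟨_, rfl⟩
  have hd : d * b4 = 1 := by rw [hd_def]; exact inv_mul_cancel₀ hb4
  obtain ⟨α, hα_def⟩ : ∃ α : F, α = -(b2 * d * c24 + σ (b2 * d * c24)) := ⟨_, rfl⟩
  obtain ⟨β, hβ_def⟩ : ∃ β : F, β = c23 - b3 * d * c24 - σ (b2 * d) * σ c34 := ⟨_, rfl⟩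
  obtain ⟨γ, hγ_def⟩ : ∃ γ : F, γ = -(b3 * d * c34 + σ (b3 * d * c34)) := ⟨_, rfl⟩
  have hQ : ∀ a2 a3 : F,
      σ a2 * a3 * c23 + σ a2 * (-(a2 * b2 + a3 * b3) * d) * c24 + σ a3 * a2 * σ c23 +
        σ a3 * (-(a2 * b2 + a3 * b3) * d) * c34 +
        σ (-(a2 * b2 + a3 * b3) * d) * a2 * σ c24 +
        σ (-(a2 * b2 + a3 * b3) * d) * a3 * σ c34
      = α * (a2 * σ a2) + β * (σ a2 * a3) + σ β * (σ a3 * a2) + γ * (a3 * σ a3) := by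
    intro a2 a3
    simp only [hα_def, hβ_def, hγ_def, map_neg, map_add, map_sub, _root_.map_mul, hσσ]
    ring
  have hL : ∀ a2 a3 : F, a2 * b2 + a3 * b3 + -(a2 * b2 + a3 * b3) * d * b4 = 0 := by
    intro a2 a3
    linear_combination (-(a2 * b2 + a3 * b3)) * hd
  by_cases hα0 : α = 0
  · refine ⟨1, 0, -(1 * b2 + 0 * b3) * d, fun h => one_ne_zero h.1, hL 1 0, ?_⟩
    rw [hQ 1 0]
    simp [hα0]
  · have hαfix : σ α = α := by
      simp only [hα_def, map_neg, map_add, _root_.map_mul, hσσ]; ring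
    have hγfix : σ γ = γ := by
      simp only [hγ_def, map_neg, map_add, _root_.map_mul, hσσ]; ring
    have htfix : σ ((β * σ β * α⁻¹ - γ) * α⁻¹) = (β * σ β * α⁻¹ - γ) * α⁻¹ := by
      simp only [_root_.map_mul, map_sub, map_inv₀, hσσ, hαfix, hγfix]; ring
    obtain ⟨b, hb⟩ := hnorm _ htfix
    refine ⟨b - β * α⁻¹, 1, -((b - β * α⁻¹) * b2 + 1 * b3) * d,
      fun h => one_ne_zero h.2.1, hL _ 1, ?_⟩
    rw [hQ]
    have hσa : σ (b - β * α⁻¹) = σ b - σ β * α⁻¹ := by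
      rw [map_sub, _root_.map_mul, map_inv₀, hαfix]
    rw [hσa, _root_.map_one]
    have hαinv : α * α⁻¹ = 1 := mul_inv_cancel₀ hα0
    linear_combination α * hb + (-(b * σ β) - β * σ b + 2 * β * σ β * α⁻¹ - γ) * hαinv

/-- Given isotropic vectors `x₁, x₂, x₃, x₄` with `x₁* x₄ ≠ 0`, there exist
`a₂, a₃, a₄`, not all zero, such that for every `a₁` the combination
`v = a₁ x₁ + a₂ x₂ + a₃ x₃ + a₄ x₄` satisfies `v* v = 0` and `x₁* v = 0`. -/

theorem isotropic_combination
    (q : ℕ) (hq : IsPrimePow q)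
    (F : Type) [Field F] [Fintype F]
    (hF : Fintype.card F = q ^ 2) (n : ℕ) (hn : 2 ≤ n)
    (x₁ x₂ x₃ x₄ : Fin n → F)
    (h1 : (fun i => (x₁ i) ^ q) ⬝ᵥ x₁ = 0)
    (h2 : (fun i => (x₂ i) ^ q) ⬝ᵥ x₂ = 0)
    (h3 : (fun i => (x₃ i) ^ q) ⬝ᵥ x₃ = 0)
    (h4 : (fun i => (x₄ i) ^ q) ⬝ᵥ x₄ = 0)
    (h14 : (fun i => (x₁ i) ^ q) ⬝ᵥ x₄ ≠ 0) :
    ∃ a₂ a₃ a₄ : F, ¬ (a₂ = 0 ∧ a₃ = 0 ∧ a₄ = 0) ∧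
      ∀ a₁ : F,
        (fun i => ((a₁ • x₁ + a₂ • x₂ + a₃ • x₃ + a₄ • x₄) i) ^ q) ⬝ᵥ
            (a₁ • x₁ + a₂ • x₂ + a₃ • x₃ + a₄ • x₄) = 0 ∧
        (fun i => (x₁ i) ^ q) ⬝ᵥ (a₁ • x₁ + a₂ • x₂ + a₃ • x₃ + a₄ • x₄) = 0 := by
  obtain ⟨p, k, hp, hk, hpk⟩ := hq
  have hp' : p.Prime := hp.nat_prime
  have hq2 : 2 ≤ q := by
    have h : p ≤ q := hpk ▸ Nat.le_self_pow (by omega) p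
    have := hp'.two_le
    omega
  have hrp : (ringChar F).Prime := CharP.char_is_prime F (ringChar F)
  obtain ⟨m, hmp, hmcard⟩ := FiniteField.card F (ringChar F)
  have hcard : (ringChar F) ^ (m : ℕ) = p ^ (2 * k) := by
    rw [← hmcard, hF, ← hpk]; ring
  have hpr : p = ringChar F := by
    have hdvd : p ∣ (ringChar F) ^ (m : ℕ) := by
      rw [hcard]; exact dvd_pow_self p (by omega)
    exact (Nat.prime_dvd_prime_iff_eq hp' hrp).1 (hp'.dvd_of_dvd_pow hdvd)
  haveI : CharP F p := by rw [hpr]; infer_instance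
  haveI : Fact p.Prime := ⟨hp'⟩
  obtain ⟨σ, hσ⟩ : ∃ σ : F →+* F, ∀ x : F, σ x = x ^ q :=
    ⟨{ toFun := fun x => x ^ q
       map_one' := one_pow q
       map_mul' := fun x y => mul_pow x y q
       map_zero' := zero_pow (by omega)
       map_add' := fun x y => by rw [← hpk]; exact add_pow_char_pow x y p k },
     fun _ => rfl⟩
  have hσσ : ∀ x : F, σ (σ x) = x := by
    intro x
    rw [hσ, hσ, ← pow_mul, show q * q = Fintype.card F by rw [hF]; ring]
    exact FiniteField.pow_card x
  have hnorm : ∀ t : F, σ t = t → ∃ b : F, b * σ b = t := by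
    intro t ht
    obtain ⟨b, hb⟩ := norm_surj_aux q hq2 F hF t (by rw [← hσ]; exact ht)
    exact ⟨b, by rw [hσ, ← hb]; ring⟩
  have conj : ∀ u v : Fin n → F,
      σ ((fun i => u i ^ q) ⬝ᵥ v) = (fun i => v i ^ q) ⬝ᵥ u := by
    intro u v
    simp only [dotProduct]
    rw [map_sum]
    refine Finset.sum_congr rfl fun i _ => ?_
    calc σ (u i ^ q * v i) = σ (σ (u i)) * σ (v i) := by rw [_root_.map_mul, hσ (u i)]
      _ = u i * v i ^ q := by rw [hσσ, hσ]
      _ = v i ^ q * u i := mul_comm _ _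
  have key : ∀ a₁ a₂ a₃ a₄ : F,
      (fun i => ((a₁ • x₁ + a₂ • x₂ + a₃ • x₃ + a₄ • x₄) i) ^ q) ⬝ᵥ
          (a₁ • x₁ + a₂ • x₂ + a₃ • x₃ + a₄ • x₄) =
        σ a₁ * a₁ * ((fun i => x₁ i ^ q) ⬝ᵥ x₁) + σ a₁ * a₂ * ((fun i => x₁ i ^ q) ⬝ᵥ x₂) +
        σ a₁ * a₃ * ((fun i => x₁ i ^ q) ⬝ᵥ x₃) + σ a₁ * a₄ * ((fun i => x₁ i ^ q) ⬝ᵥ x₄) +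
        σ a₂ * a₁ * ((fun i => x₂ i ^ q) ⬝ᵥ x₁) + σ a₂ * a₂ * ((fun i => x₂ i ^ q) ⬝ᵥ x₂) +
        σ a₂ * a₃ * ((fun i => x₂ i ^ q) ⬝ᵥ x₃) + σ a₂ * a₄ * ((fun i => x₂ i ^ q) ⬝ᵥ x₄) +
        σ a₃ * a₁ * ((fun i => x₃ i ^ q) ⬝ᵥ x₁) + σ a₃ * a₂ * ((fun i => x₃ i ^ q) ⬝ᵥ x₂) +
        σ a₃ * a₃ * ((fun i => x₃ i ^ q) ⬝ᵥ x₃) + σ a₃ * a₄ * ((fun i => x₃ i ^ q) ⬝ᵥ x₄) +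
        σ a₄ * a₁ * ((fun i => x₄ i ^ q) ⬝ᵥ x₁) + σ a₄ * a₂ * ((fun i => x₄ i ^ q) ⬝ᵥ x₂) +
        σ a₄ * a₃ * ((fun i => x₄ i ^ q) ⬝ᵥ x₃) + σ a₄ * a₄ * ((fun i => x₄ i ^ q) ⬝ᵥ x₄) := by
    intro a₁ a₂ a₃ a₄
    have hv : (fun i => ((a₁ • x₁ + a₂ • x₂ + a₃ • x₃ + a₄ • x₄) i) ^ q)
        = σ a₁ • (fun i => x₁ i ^ q) + σ a₂ • (fun i => x₂ i ^ q) +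
          σ a₃ • (fun i => x₃ i ^ q) + σ a₄ • (fun i => x₄ i ^ q) := by
      funext i
      simp only [Pi.add_apply, Pi.smul_apply, smul_eq_mul]
      rw [show (a₁ * x₁ i + a₂ * x₂ i + a₃ * x₃ i + a₄ * x₄ i) ^ q
            = σ (a₁ * x₁ i + a₂ * x₂ i + a₃ * x₃ i + a₄ * x₄ i) from (hσ _).symm,
          map_add, map_add, map_add, _root_.map_mul, _root_.map_mul, _root_.map_mul, _root_.map_mul,
          hσ (x₁ i), hσ (x₂ i), hσ (x₃ i), hσ (x₄ i)]
    rw [hv]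
    simp only [add_dotProduct, smul_dotProduct, dotProduct_add, dotProduct_smul, smul_eq_mul]
    ring
  have key2 : ∀ a₁ a₂ a₃ a₄ : F,
      (fun i => (x₁ i) ^ q) ⬝ᵥ (a₁ • x₁ + a₂ • x₂ + a₃ • x₃ + a₄ • x₄) =
        a₁ * ((fun i => x₁ i ^ q) ⬝ᵥ x₁) + a₂ * ((fun i => x₁ i ^ q) ⬝ᵥ x₂) +
        a₃ * ((fun i => x₁ i ^ q) ⬝ᵥ x₃) + a₄ * ((fun i => x₁ i ^ q) ⬝ᵥ x₄) := by
    intro a₁ a₂ a₃ a₄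
    simp only [dotProduct_add, dotProduct_smul, smul_eq_mul]
  obtain ⟨a₂, a₃, a₄, hne, hEL, hEQ⟩ :=
    scalar_main F σ hσσ hnorm
      ((fun i => x₁ i ^ q) ⬝ᵥ x₂) ((fun i => x₁ i ^ q) ⬝ᵥ x₃) ((fun i => x₁ i ^ q) ⬝ᵥ x₄)
      ((fun i => x₂ i ^ q) ⬝ᵥ x₃) ((fun i => x₂ i ^ q) ⬝ᵥ x₄) ((fun i => x₃ i ^ q) ⬝ᵥ x₄) h14
  have hELσ := congrArg σ hEL
  simp only [map_add, _root_.map_mul, map_zero] at hELσ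
  refine ⟨a₂, a₃, a₄, hne, fun a₁ => ⟨?_, ?_⟩⟩
  · rw [key a₁ a₂ a₃ a₄]
    linear_combination (σ a₁ * a₁) * h1 + (σ a₂ * a₂) * h2 + (σ a₃ * a₃) * h3 +
      (σ a₄ * a₄) * h4 + σ a₁ * hEL + a₁ * hELσ + hEQ
      - (σ a₂ * a₁) * (conj x₁ x₂) - (σ a₃ * a₁) * (conj x₁ x₃) - (σ a₄ * a₁) * (conj x₁ x₄)
      - (σ a₃ * a₂) * (conj x₂ x₃) - (σ a₄ * a₂) * (conj x₂ x₄) - (σ a₄ * a₃) * (conj x₃ x₄)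
  · rw [key2 a₁ a₂ a₃ a₄]
    linear_combination a₁ * h1 + hEL
end

section
/- Let q be a prime power and suppose that for i = 1, 2, the vectors x_i, y_i ∈ F_{q^2}^n are linearly independent and satisfy x_i* x_i = 0, y_i* y_i = 0, and x_i* y_i ≠ 0. Then there exist an n×n matrix P over F_{q^2} with P* P = I and a nonzero b ∈ F_{q^2} such that P x_1 = x_2 and P y_1 = b y_2. -/
/-!
Conjugation `a ↦ a ^ q` is an involution of `F = 𝔽_{q²}` whose norm `c ↦ c ^ (q + 1)` maps
onto the fixed field `𝔽_q`, because `Fˣ` is cyclic of order `(q + 1)(q - 1)`. Over a field with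
such an involution every nondegenerate hermitian space has an orthonormal basis: the involution
is nontrivial, so a nonzero hermitian form has a non-isotropic vector, which can be split off
and normalized. After rescaling `y` so that `x* y = 1`, the orthogonal complement of
`span {x, y}` is nondegenerate, so each pair extends to a basis with the same Gram matrix
`!![0, 1; 1, 0] ⊕ 1`. The change of basis between the two is then unitary.
-/

open Matrix Module Submodule

namespace FiniteField

variable {F : Type*} [Field F] [Fintype F] {q : ℕ}

theorem add_pow_of_card_eq_sq (hq : IsPrimePow q) (hF : Fintype.card F = q ^ 2) (a b : F) :
    (a + b) ^ q = a ^ q + b ^ q := by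
  obtain ⟨p, k, hp, -, rfl⟩ := hq
  have : Fact p.Prime := ⟨hp.nat_prime⟩
  have : CharP F p := charP_of_card_eq_prime_pow (f := k * 2) (by rw [hF, pow_mul])
  exact add_pow_char_pow a b p k

theorem pow_pow_of_card_eq_sq (hF : Fintype.card F = q ^ 2) (a : F) : (a ^ q) ^ q = a := by
  rw [← pow_mul, ← sq, ← hF, FiniteField.pow_card]

theorem two_le_of_card_eq_sq (hF : Fintype.card F = q ^ 2) : 2 ≤ q := by
  have := hF ▸ Fintype.one_lt_card (α := F)
  by_contra! h
  interval_cases q <;> simp at this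

theorem card_ker_powMonoidHom_sub_one (hF : Fintype.card F = q ^ 2) :
    Nat.card (powMonoidHom (q - 1) : Fˣ →* Fˣ).ker = q - 1 := by
  rw [IsCyclic.card_powMonoidHom_ker, Nat.card_units, Nat.card_eq_fintype_card, hF]
  refine Nat.gcd_eq_right ⟨q + 1, ?_⟩
  have := two_le_of_card_eq_sq hF
  zify [Nat.one_le_pow 2 q (by omega), (by omega : 1 ≤ q)]
  ring

theorem range_powMonoidHom_succ (hF : Fintype.card F = q ^ 2) :
    (powMonoidHom (q + 1) : Fˣ →* Fˣ).range = (powMonoidHom (q - 1)).ker := by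
  have hq := two_le_of_card_eq_sq hF
  have hcard : Nat.card Fˣ = (q + 1) * (q - 1) := by
    rw [Nat.card_units, Nat.card_eq_fintype_card, hF]
    zify [Nat.one_le_pow 2 q (by omega), (by omega : 1 ≤ q)]
    ring
  refine Subgroup.eq_of_le_of_card_ge ?_ ?_
  · rintro _ ⟨u, rfl⟩
    rw [MonoidHom.mem_ker, powMonoidHom_apply, powMonoidHom_apply, ← pow_mul, ← hcard,
      pow_card_eq_one']
  · rw [card_ker_powMonoidHom_sub_one hF, IsCyclic.card_powMonoidHom_range, hcard,
      Nat.gcd_mul_right_left, Nat.mul_div_cancel_left _ (by omega)]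

theorem mem_ker_powMonoidHom_sub_one (hF : Fintype.card F = q ^ 2) {a : F} (ha₀ : a ≠ 0)
    (ha : a ^ q = a) : Units.mk0 a ha₀ ∈ (powMonoidHom (q - 1) : Fˣ →* Fˣ).ker := by
  rw [MonoidHom.mem_ker, powMonoidHom_apply, Units.ext_iff, Units.val_pow_eq_pow_val,
    Units.val_mk0, Units.val_one, pow_sub₀ a ha₀ (by linarith [two_le_of_card_eq_sq hF]), pow_one,
    ha, mul_inv_cancel₀ ha₀]

theorem exists_pow_mul_self_eq (hF : Fintype.card F = q ^ 2) (a : F) (ha : a ^ q = a) :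
    ∃ c : F, c ^ q * c = a := by
  obtain rfl | ha₀ := eq_or_ne a 0
  · exact ⟨0, by simp⟩
  obtain ⟨c, hc⟩ := (range_powMonoidHom_succ hF).ge (mem_ker_powMonoidHom_sub_one hF ha₀ ha)
  exact ⟨c, by simpa [← pow_succ] using congr_arg Units.val hc⟩

theorem exists_pow_ne_self (hF : Fintype.card F = q ^ 2) : ∃ c : F, c ^ q ≠ c := by
  by_contra! h
  have htop : (powMonoidHom (q - 1) : Fˣ →* Fˣ).ker = ⊤ := by
    refine eq_top_iff.2 fun u _ => ?_
    simpa using mem_ker_powMonoidHom_sub_one hF u.ne_zero (h u)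
  have := card_ker_powMonoidHom_sub_one hF
  rw [htop, Subgroup.card_top, Nat.card_units, Nat.card_eq_fintype_card, hF] at this
  have := two_le_of_card_eq_sq hF
  have : q ^ 2 = q := by omega
  nlinarith

-- With this instance `star u ⬝ᵥ v` is `(fun i => u i ^ q) ⬝ᵥ v` and `star P` is
-- `(P.map (· ^ q))ᵀ`, definitionally.
abbrev frobeniusStarRing (hq : IsPrimePow q) (hF : Fintype.card F = q ^ 2) : StarRing F where
  star a := a ^ q
  star_involutive := pow_pow_of_card_eq_sq hF
  star_mul a b := by rw [mul_pow, mul_comm]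
  star_add := add_pow_of_card_eq_sq hq hF

end FiniteField

namespace LinearMap

section Semilinear

variable {K V : Type*} [Field K] [AddCommGroup V] [Module K V] {J : K →+* K}
  {B : V →ₛₗ[J] V →ₗ[K] K}

theorem orthogonalBilin_span_singleton_eq_ker (x : V) :
    (K ∙ x).orthogonalBilin B = ker (B x) := by
  ext y
  simp only [mem_orthogonalBilin_iff, mem_ker, mem_span_singleton]
  refine ⟨fun h => h x ⟨1, one_smul K x⟩, ?_⟩
  rintro h _ ⟨c, rfl⟩
  rw [map_smulₛₗ₂, h, smul_zero]

theorem isCompl_span_singleton_orthogonalBilin {x : V} (hx : B x x ≠ 0) :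
    IsCompl (K ∙ x) ((K ∙ x).orthogonalBilin B) where
  disjoint := disjoint_iff.2 (span_singleton_inf_orthogonal_eq_bot B x hx)
  codisjoint := codisjoint_iff.2 <| by
    rw [orthogonalBilin_span_singleton_eq_ker]
    exact (B x).span_singleton_sup_ker_eq_top hx

theorem mem_orthogonalBilin_span_pair {x y w : V} :
    w ∈ (span K {x, y}).orthogonalBilin B ↔ B x w = 0 ∧ B y w = 0 := by
  refine ⟨fun h => ⟨h x (subset_span (by simp)), h y (subset_span (by simp))⟩, ?_⟩
  rintro ⟨hx, hy⟩ z hz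
  obtain ⟨a, b, rfl⟩ := mem_span_pair.1 hz
  simp [hx, hy]

theorem exists_isometry_of_toMatrix₂_eq {ι : Type*} [Fintype ι] [DecidableEq ι]
    {b₁ b₂ : Basis ι K V} (h : toMatrix₂ b₁ b₁ B = toMatrix₂ b₂ b₂ B) :
    ∃ e : V ≃ₗ[K] V, (∀ i, e (b₁ i) = b₂ i) ∧ ∀ u w, B (e u) (e w) = B u w := by
  set e := b₁.equiv b₂ (Equiv.refl ι)
  refine ⟨e, fun i => by simp [e], fun u w => ?_⟩
  have hB := ext_basis b₁ b₁ (B := (B.comp (e : V →ₗ[K] V)).compl₂ (e : V →ₗ[K] V)) (B' := B)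
    fun i j => by simpa [e, toMatrix₂_apply] using (_root_.congr_fun₂ h i j).symm
  exact congr_fun₂ hB u w

theorem separatingLeft_domRestrict_orthogonalBilin (hB : B.IsRefl) (hB' : B.SeparatingLeft)
    {W : Submodule K V} (hW : IsCompl W (W.orthogonalBilin B)) :
    (B.domRestrict₁₂ (W.orthogonalBilin B) (W.orthogonalBilin B)).SeparatingLeft := by
  rintro ⟨w, hw⟩ hw'
  ext1
  refine hB' w fun u => ?_
  obtain ⟨p, hp, w', hw'', rfl⟩ := mem_sup.1 (hW.codisjoint.eq_top ▸ mem_top : u ∈ W ⊔ _)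
  rw [map_add, hB _ _ (hw p hp), zero_add]
  exact hw' ⟨w', hw''⟩

end Semilinear

variable {K V : Type*} [Field K] [StarRing K] [AddCommGroup V] [Module K V]
  {B : V →ₗ⋆[K] V →ₗ[K] K}

theorem IsSymm.exists_apply_self_ne_zero_s18 (hB : B.IsSymm) (hK : ∃ c : K, star c ≠ c)
    (hB₀ : B ≠ 0) : ∃ x, B x x ≠ 0 := by
  by_contra! h
  -- polarization: `B x y + star (B x y) = B (x + y) (x + y) = 0`
  have hpol : ∀ x y, B x y + star (B x y) = 0 := fun x y => by
    have := h (x + y)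
    rw [map_add, map_add, add_apply, add_apply, h x, h y, ← hB.eq x y, starRingEnd_apply,
      zero_add, add_zero] at this
    linear_combination this
  obtain ⟨c, hc⟩ := hK
  refine hB₀ (ext₂ fun x y => ?_)
  have h₁ := hpol x y
  have h₂ := hpol (c • x) y
  rw [map_smulₛₗ, smul_apply, starRingEnd_apply, smul_eq_mul, star_mul, star_star] at h₂
  have : (star c - c) * B x y = 0 := by linear_combination h₂ - c * h₁
  exact (mul_eq_zero.1 this).resolve_left (sub_ne_zero.2 hc)

theorem IsSymm.exists_orthogonal_basis_s18 [FiniteDimensional K V] (hK : ∃ c : K, star c ≠ c)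
    (hB : B.IsSymm) : ∃ v : Basis (Fin (finrank K V)) K V, B.IsOrthoᵢ v := by
  suffices ∀ d, finrank K V = d → ∃ v : Basis (Fin d) K V, B.IsOrthoᵢ v from this _ rfl
  intro d hd
  induction d generalizing V with
  | zero => exact ⟨basisOfFinrankZero hd, fun i => Fin.elim0 i⟩
  | succ d ih =>
    obtain rfl | hB₀ := eq_or_ne B 0
    · exact ⟨(finBasis K V).reindex (finCongr hd), fun _ _ _ => rfl⟩
    obtain ⟨x, hx⟩ := hB.exists_apply_self_ne_zero_s18 hK hB₀
    have hc := isCompl_span_singleton_orthogonalBilin hx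
    rw [← finrank_add_eq_of_isCompl hc, finrank_span_singleton (ne_zero_of_map hx),
      add_comm] at hd
    obtain ⟨v, hv⟩ := ih (hB.domRestrict _) (Nat.succ.inj hd)
    have hW : ∀ y, y ∈ (K ∙ x).orthogonalBilin B ↔ B x y = 0 := fun y => by
      rw [orthogonalBilin_span_singleton_eq_ker, mem_ker]
    refine ⟨Basis.mkFinCons x v (fun c y hy hxy => ?_) (fun y => ⟨-(B x y / B x x), ?_⟩), ?_⟩
    · have := congr_arg (B x) hxy
      rw [map_add, map_smul, (hW y).1 hy, map_zero, add_zero, smul_eq_mul] at this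
      exact (mul_eq_zero.1 this).resolve_right hx
    · rw [hW, map_add, map_smul, smul_eq_mul, neg_mul, div_mul_cancel₀ _ hx, add_neg_cancel]
    · rw [Basis.coe_mkFinCons]
      intro i j hij
      induction i using Fin.cases <;> induction j using Fin.cases
      · exact absurd rfl hij
      · exact (hW _).1 (v _).2
      · exact hB.isRefl _ _ ((hW _).1 (v _).2)
      · exact hv (fun h => hij (congr_arg Fin.succ h))

theorem IsSymm.exists_orthonormal_basis [FiniteDimensional K V] (hK : ∃ c : K, star c ≠ c)
    (hnorm : ∀ a : K, star a = a → ∃ c, star c * c = a) (hB : B.IsSymm)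
    (hB' : B.SeparatingLeft) : ∃ v : Basis (Fin (finrank K V)) K V, toMatrix₂ v v B = 1 := by
  obtain ⟨v, hv⟩ := hB.exists_orthogonal_basis_s18 hK
  have hd := hv.not_isOrtho_basis_self_of_separatingLeft hB'
  choose c hc using fun i => hnorm (B (v i) (v i))⁻¹ (by rw [star_inv₀, ← starRingEnd_apply, hB.eq])
  have hc₀ : ∀ i, c i ≠ 0 := fun i h => hd i <| by
    simpa [h, eq_comm (a := (0 : K))] using hc i
  refine ⟨v.isUnitSMul fun i => (hc₀ i).isUnit, ?_⟩
  ext i j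
  simp only [toMatrix₂_apply, Basis.isUnitSMul_apply, map_smulₛₗ₂, map_smul, smul_eq_mul,
    starRingEnd_apply]
  obtain rfl | hij := eq_or_ne i j
  · rw [Matrix.one_apply_eq, mul_left_comm, ← mul_assoc, hc, inv_mul_cancel₀ (hd i)]
  · rw [Matrix.one_apply_ne hij, hv hij, mul_zero, mul_zero]

section HyperbolicPair

variable {x y : V}

theorem IsSymm.linearIndependent_hyperbolic_pair (hB : B.IsSymm) (hx : B x x = 0)
    (hy : B y y = 0) (hxy : B x y = 1) : LinearIndependent K ![x, y] := by
  have hyx : B y x = 1 := by rw [← hB.eq, hxy, map_one]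
  refine LinearIndependent.pair_iff.2 fun s t hst => ⟨?_, ?_⟩
  · simpa [hy, hyx] using congr_arg (B y) hst
  · simpa [hx, hxy] using congr_arg (B x) hst

theorem IsSymm.isCompl_span_hyperbolic_pair (hB : B.IsSymm) (hx : B x x = 0)
    (hy : B y y = 0) (hxy : B x y = 1) :
    IsCompl (span K {x, y}) ((span K {x, y}).orthogonalBilin B) := by
  have hyx : B y x = 1 := by rw [← hB.eq, hxy, map_one]
  refine ⟨disjoint_def.2 fun u hu hu' => ?_, codisjoint_iff.2 (eq_top_iff.2 fun u _ => ?_)⟩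
  · obtain ⟨a, b, rfl⟩ := mem_span_pair.1 hu
    obtain ⟨h₁, h₂⟩ := mem_orthogonalBilin_span_pair.1 hu'
    simp_all
  · refine mem_sup.2 ⟨B y u • x + B x u • y, mem_span_pair.2 ⟨_, _, rfl⟩,
      u - (B y u • x + B x u • y), mem_orthogonalBilin_span_pair.2 ⟨?_, ?_⟩, add_sub_cancel _ _⟩
    · simp [hx, hxy]
    · simp [hy, hyx]

theorem IsSymm.exists_basis_hyperbolic_pair [FiniteDimensional K V] (hK : ∃ c : K, star c ≠ c)
    (hnorm : ∀ a : K, star a = a → ∃ c, star c * c = a) (hB : B.IsSymm)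
    (hB' : B.SeparatingLeft) (hx : B x x = 0) (hy : B y y = 0) (hxy : B x y = 1) :
    ∃ b : Basis (Fin 2 ⊕ Fin (finrank K V - 2)) K V, b (.inl 0) = x ∧ b (.inl 1) = y ∧
      toMatrix₂ b b B = Matrix.fromBlocks !![0, 1; 1, 0] 0 0 1 := by
  have hli := hB.linearIndependent_hyperbolic_pair hx hy hxy
  have hc := hB.isCompl_span_hyperbolic_pair hx hy hxy
  rw [← Matrix.range_cons_cons_empty x y ![]] at hc
  set W := (span K (Set.range ![x, y])).orthogonalBilin B
  have hW : finrank K W = finrank K V - 2 := by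
    have := finrank_add_eq_of_isCompl hc
    rw [finrank_span_eq_card hli, Fintype.card_fin] at this
    omega
  obtain ⟨v, hv⟩ := (hB.domRestrict W).exists_orthonormal_basis hK hnorm
    (separatingLeft_domRestrict_orthogonalBilin hB.isRefl hB' hc)
  let b := ((Basis.span hli).prod (v.reindex (finCongr hW))).map (prodEquivOfIsCompl _ _ hc)
  have hb₁ : ∀ i, b (.inl i) = ![x, y] i := fun i => by simp [b, Basis.span_apply]
  have hb₂ : ∀ j, b (.inr j) = v (finCongr hW.symm j) := fun j => by simp [b]
  have hyx : B y x = 1 := by rw [← hB.eq, hxy, map_one]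
  refine ⟨b, hb₁ 0, hb₁ 1, ?_⟩
  ext (i | i) (j | j)
  · fin_cases i <;> fin_cases j <;> simp [toMatrix₂_apply, hb₁, hx, hy, hxy, hyx]
  · rw [toMatrix₂_apply, hb₁, hb₂]
    exact (v _).2 _ (subset_span ⟨i, rfl⟩)
  · rw [toMatrix₂_apply, hb₁, hb₂]
    exact hB.isRefl _ _ ((v _).2 _ (subset_span ⟨j, rfl⟩))
  · have := _root_.congr_fun₂ hv (finCongr hW.symm i) (finCongr hW.symm j)
    simpa [toMatrix₂_apply, hb₂, Matrix.one_apply, domRestrict₁₂_apply] using this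

end HyperbolicPair

theorem IsSymm.exists_isometry_of_hyperbolic_pairs [FiniteDimensional K V]
    (hK : ∃ c : K, star c ≠ c) (hnorm : ∀ a : K, star a = a → ∃ c, star c * c = a)
    (hB : B.IsSymm) (hB' : B.SeparatingLeft) {x₁ y₁ x₂ y₂ : V}
    (hx₁ : B x₁ x₁ = 0) (hy₁ : B y₁ y₁ = 0) (hxy₁ : B x₁ y₁ = 1)
    (hx₂ : B x₂ x₂ = 0) (hy₂ : B y₂ y₂ = 0) (hxy₂ : B x₂ y₂ = 1) :
    ∃ e : V ≃ₗ[K] V, e x₁ = x₂ ∧ e y₁ = y₂ ∧ ∀ u w, B (e u) (e w) = B u w := by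
  obtain ⟨b₁, hbx₁, hby₁, hG₁⟩ := hB.exists_basis_hyperbolic_pair hK hnorm hB' hx₁ hy₁ hxy₁
  obtain ⟨b₂, hbx₂, hby₂, hG₂⟩ := hB.exists_basis_hyperbolic_pair hK hnorm hB' hx₂ hy₂ hxy₂
  obtain ⟨e, he, hiso⟩ := exists_isometry_of_toMatrix₂_eq (hG₁.trans hG₂.symm)
  exact ⟨e, hbx₁ ▸ hbx₂ ▸ he _, hby₁ ▸ hby₂ ▸ he _, hiso⟩

theorem IsSymm.exists_isometry_of_isotropic_pairs [FiniteDimensional K V]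
    (hK : ∃ c : K, star c ≠ c) (hnorm : ∀ a : K, star a = a → ∃ c, star c * c = a)
    (hB : B.IsSymm) (hB' : B.SeparatingLeft) {x₁ y₁ x₂ y₂ : V}
    (hx₁ : B x₁ x₁ = 0) (hy₁ : B y₁ y₁ = 0) (hxy₁ : B x₁ y₁ ≠ 0)
    (hx₂ : B x₂ x₂ = 0) (hy₂ : B y₂ y₂ = 0) (hxy₂ : B x₂ y₂ ≠ 0) :
    ∃ e : V ≃ₗ[K] V, e x₁ = x₂ ∧ e y₁ = (B x₁ y₁ / B x₂ y₂) • y₂ ∧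
      ∀ u w, B (e u) (e w) = B u w := by
  have normalize : ∀ {x y : V}, B y y = 0 → B x y ≠ 0 →
      B ((B x y)⁻¹ • y) ((B x y)⁻¹ • y) = 0 ∧ B x ((B x y)⁻¹ • y) = 1 := fun hy hxy => by
    simp [hy, hxy]
  obtain ⟨e, hex, hey, hiso⟩ := hB.exists_isometry_of_hyperbolic_pairs hK hnorm hB'
    hx₁ (normalize hy₁ hxy₁).1 (normalize hy₁ hxy₁).2
    hx₂ (normalize hy₂ hxy₂).1 (normalize hy₂ hxy₂).2
  refine ⟨e, hex, ?_, hiso⟩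
  calc e y₁ = B x₁ y₁ • e ((B x₁ y₁)⁻¹ • y₁) := by rw [map_smul, smul_inv_smul₀ hxy₁]
    _ = (B x₁ y₁ / B x₂ y₂) • y₂ := by rw [hey, smul_smul, div_eq_mul_inv]

end LinearMap

namespace Matrix

variable {K ι : Type*} [Field K] [StarRing K] [Fintype ι]

def starDotProductₛₗ : (ι → K) →ₗ⋆[K] (ι → K) →ₗ[K] K :=
  LinearMap.mk₂'ₛₗ (starRingEnd K) (RingHom.id K) (fun u v => star u ⬝ᵥ v)
    (fun u u' v => by rw [star_add, add_dotProduct])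
    (fun c u v => by rw [star_smul, smul_dotProduct, starRingEnd_apply, smul_eq_mul])
    (fun u v v' => dotProduct_add _ _ _) (fun c u v => dotProduct_smul _ _ _)

@[simp]
theorem starDotProductₛₗ_apply (u v : ι → K) : starDotProductₛₗ u v = star u ⬝ᵥ v := rfl

theorem isSymm_starDotProductₛₗ : (starDotProductₛₗ : (ι → K) →ₗ⋆[K] _).IsSymm :=
  ⟨fun u v => by
    rw [starDotProductₛₗ_apply, starDotProductₛₗ_apply, starRingEnd_apply, star_dotProduct,
      star_star]⟩

theorem separatingLeft_starDotProductₛₗ [DecidableEq ι] :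
    (starDotProductₛₗ : (ι → K) →ₗ⋆[K] _).SeparatingLeft := fun u hu => by
  ext i
  simpa using hu (Pi.single i 1)

end Matrix

theorem LinearMap.toMatrix'_mem_unitaryGroup {K ι : Type*} [Field K] [StarRing K] [Fintype ι]
    [DecidableEq ι] {e : (ι → K) →ₗ[K] ι → K} (he : ∀ u v, star (e u) ⬝ᵥ e v = star u ⬝ᵥ v) :
    LinearMap.toMatrix' e ∈ Matrix.unitaryGroup ι K := by
  rw [Matrix.mem_unitaryGroup_iff']
  ext i j
  simpa [Matrix.mul_apply, dotProduct, Matrix.one_apply, Pi.single_apply, @eq_comm _ j i,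
    apply_ite star] using he (Pi.single i 1) (Pi.single j 1)

theorem unitary_transitive_on_hyperbolic_pairs_general
    (q : ℕ) (hq : IsPrimePow q)
    (F : Type) [Field F] [Fintype F]
    (hF : Fintype.card F = q ^ 2) (n : ℕ)
    (x₁ y₁ x₂ y₂ : Fin n → F)
    (hx1 : (fun i => (x₁ i) ^ q) ⬝ᵥ x₁ = 0)
    (hy1 : (fun i => (y₁ i) ^ q) ⬝ᵥ y₁ = 0)
    (hxy1 : (fun i => (x₁ i) ^ q) ⬝ᵥ y₁ ≠ 0)
    (hx2 : (fun i => (x₂ i) ^ q) ⬝ᵥ x₂ = 0)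
    (hy2 : (fun i => (y₂ i) ^ q) ⬝ᵥ y₂ = 0)
    (hxy2 : (fun i => (x₂ i) ^ q) ⬝ᵥ y₂ ≠ 0) :
    ∃ (P : Matrix (Fin n) (Fin n) F) (b : F), b ≠ 0 ∧
      (P.map (· ^ q))ᵀ * P = 1 ∧ P *ᵥ x₁ = x₂ ∧ P *ᵥ y₁ = b • y₂ := by
  let _ : StarRing F := FiniteField.frobeniusStarRing hq hF
  obtain ⟨e, hex, hey, he⟩ := isSymm_starDotProductₛₗ.exists_isometry_of_isotropic_pairs
    (x₁ := x₁) (y₁ := y₁) (x₂ := x₂) (y₂ := y₂)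
    (FiniteField.exists_pow_ne_self hF) (FiniteField.exists_pow_mul_self_eq hF)
    separatingLeft_starDotProductₛₗ hx1 hy1 hxy1 hx2 hy2 hxy2
  refine ⟨LinearMap.toMatrix' (e : (Fin n → F) →ₗ[F] Fin n → F), _, div_ne_zero hxy1 hxy2,
    mem_unitaryGroup_iff'.1 (LinearMap.toMatrix'_mem_unitaryGroup he), ?_, ?_⟩
  · rw [LinearMap.toMatrix'_mulVec, LinearEquiv.coe_coe, hex]
  · rw [LinearMap.toMatrix'_mulVec, LinearEquiv.coe_coe]
    exact hey

/-- For `i = 1, 2`, let `xᵢ, yᵢ` be linearly independent isotropic vectors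
with `xᵢ* yᵢ ≠ 0`. Then some unitary `P` maps `x₁` to `x₂` and `y₁` to a
nonzero multiple of `y₂`. -/
theorem unitary_transitive_on_hyperbolic_pairs
    (q : ℕ) (hq : IsPrimePow q)
    (F : Type) [Field F] [Fintype F]
    (hF : Fintype.card F = q ^ 2) (n : ℕ)
    (x₁ y₁ x₂ y₂ : Fin n → F)
    (hli1 : LinearIndependent F ![x₁, y₁])
    (hli2 : LinearIndependent F ![x₂, y₂])
    (hx1 : (fun i => (x₁ i) ^ q) ⬝ᵥ x₁ = 0)
    (hy1 : (fun i => (y₁ i) ^ q) ⬝ᵥ y₁ = 0)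
    (hxy1 : (fun i => (x₁ i) ^ q) ⬝ᵥ y₁ ≠ 0)
    (hx2 : (fun i => (x₂ i) ^ q) ⬝ᵥ x₂ = 0)
    (hy2 : (fun i => (y₂ i) ^ q) ⬝ᵥ y₂ = 0)
    (hxy2 : (fun i => (x₂ i) ^ q) ⬝ᵥ y₂ ≠ 0) :
    ∃ (P : Matrix (Fin n) (Fin n) F) (b : F), b ≠ 0 ∧
      (P.map (· ^ q))ᵀ * P = 1 ∧ P *ᵥ x₁ = x₂ ∧ P *ᵥ y₁ = b • y₂ :=
  unitary_transitive_on_hyperbolic_pairs_general q hq F hF n x₁ y₁ x₂ y₂ hx1 hy1 hxy1 hx2 hy2 hxy2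
end
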